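/- arXiv:2206.11099 — 8 statements merged into one kernel-verified Lean document; each statement's English description precedes it below -/
import Mathlib

section
/- Let D be a semi-Heyting sublattice of a bounded distributive lattice E, let a, b ∈ E, and set B := BR(D), viewed as a generalized Boolean subalgebra of BR(E). Assume: (1) E is generated as a lattice by D ∪ {a, b}; (2) a ∧ b = 0; (3) the elements a_B, b_B, (a ∨ b)_B, a^B, b^B all exist in BR(E) relative to the subset B; (4) (a ∨ b)_B = a_B ∨ b_B. Then c^B ∈ D for every c ∈ {a, b, a ∨ b}. Moreover, for every distributive 0-lattice L, every 0-lattice homomorphism f : D → L, and all α, β ∈ L, the following are equivalent: (i) there is a lattice homomorphism g : E → L extending f with g(a) = α and g(b) = β; (ii) α ≤ f(a^B), β ≤ f(b^B), α ∧ β = 0, BR(f)(a_B) ≤ α in BR(L), and BR(f)(b_B) ≤ β in BR(L). -/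
/-!
Every element of the generalized Boolean algebra `B` generated by `j '' D` is a finite join of
differences `j p \ j q` with `p, q ∈ D`. Peeling off one difference at a time and absorbing the
subtracted part with a relative pseudocomplement of `D`, any `c ∈ E` with `j c ≤ z ∈ B` lies below
some `d ∈ D` with `j d ≤ z`. Hence `c^B = j (c^D)`, where `c^D` is the least element of `D`
above `c`.

Since `a ⊓ b = ⊥`, every element of `E` has the form `x₀ ⊔ (x₁ ⊓ a) ⊔ (x₂ ⊓ b)` with `xᵢ ∈ D`
and `x₀ ≤ x₁, x₂`, and an extension `g` must send it to `f x₀ ⊔ (f x₁ ⊓ α) ⊔ (f x₂ ⊓ β)`. This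
prescription is a well-defined homomorphism once it is monotone in the representation. The
coefficients of `a` and `b` are handled by `α ≤ f (a^D)` and `β ≤ f (b^D)` through the
relative pseudocomplements. For the constant term, comparison with a second representation
`(y₀, y₁, y₂)` puts `j x₀ \ j y₀` in `B` below `j (a ⊔ b)`, so `(a ⊔ b)_B = a_B ⊔ b_B` splits it
into pieces below `a_B` and below `b_B`, which `BR(f)` sends below `α` and `β`. Conversely, for
an extension `g`, writing `a_B` as a join of differences shows `BR(f)(a_B) ≤ g a`.
-/

/-- Membership in the sublattice generated by a subset `S`. -/
inductive LatClosure {E : Type*} [Lattice E] (S : Set E) : E → Prop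
  | base {x : E} (hx : x ∈ S) : LatClosure S x
  | sup {x y : E} : LatClosure S x → LatClosure S y → LatClosure S (x ⊔ y)
  | inf {x y : E} : LatClosure S x → LatClosure S y → LatClosure S (x ⊓ y)

/-- Membership in the generalized Boolean subalgebra generated by a subset `S`. -/
inductive GBAClosure {C : Type*} [GeneralizedBooleanAlgebra C] (S : Set C) : C → Prop
  | base {x : C} (hx : x ∈ S) : GBAClosure S x
  | bot : GBAClosure S ⊥
  | sup {x y : C} : GBAClosure S x → GBAClosure S y → GBAClosure S (x ⊔ y)
  | inf {x y : C} : GBAClosure S x → GBAClosure S y → GBAClosure S (x ⊓ y)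
  | sdiff {x y : C} : GBAClosure S x → GBAClosure S y → GBAClosure S (x \ y)

theorem isLeast_sup_of_isLeast {α : Type*} [SemilatticeSup α] {p : α → Prop}
    (hp : ∀ x y, p x → p y → p (x ⊔ y)) {x y u v : α} (hu : IsLeast {z | p z ∧ x ≤ z} u)
    (hv : IsLeast {z | p z ∧ y ≤ z} v) : IsLeast {z | p z ∧ x ⊔ y ≤ z} (u ⊔ v) :=
  ⟨⟨hp _ _ hu.1.1 hv.1.1, sup_le_sup hu.1.2 hv.1.2⟩, fun _ hz =>
    sup_le (hu.2 ⟨hz.1, le_sup_left.trans hz.2⟩) (hv.2 ⟨hz.1, le_sup_right.trans hz.2⟩)⟩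

section HomOn

variable {E L : Type*} [Lattice E] [Lattice L]

def IsLatticeHomOn (D : Set E) (f : E → L) : Prop :=
  ∀ x ∈ D, ∀ y ∈ D, f (x ⊔ y) = f x ⊔ f y ∧ f (x ⊓ y) = f x ⊓ f y

theorem IsLatticeHomOn.monotoneOn {D : Set E} {f : E → L} (hf : IsLatticeHomOn D f) :
    MonotoneOn f D := fun x hx y hy hxy =>
  calc f x ≤ f x ⊔ f y := le_sup_left
    _ = f y := by rw [← (hf x hx y hy).1, sup_eq_right.2 hxy]

theorem IsLatticeHomOn.mono {D D' : Set E} {f : E → L} (hf : IsLatticeHomOn D f) (hD' : D' ⊆ D) :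
    IsLatticeHomOn D' f := fun x hx y hy => hf x (hD' hx) y (hD' hy)

theorem IsLatticeHomOn.comp {K : Type*} [Lattice K] {D : Set E} {D' : Set L} {f : E → L}
    {g : L → K} (hg : IsLatticeHomOn D' g) (hf : IsLatticeHomOn D f) (hfD : Set.MapsTo f D D') :
    IsLatticeHomOn D (g ∘ f) := fun x hx y hy => by
  simp only [Function.comp_apply, (hf x hx y hy).1, (hf x hx y hy).2,
    hg _ (hfD hx) _ (hfD hy), and_self]

theorem IsLatticeHomOn.prodMap {D : Set E} {f : E → L} (hf : IsLatticeHomOn D f) :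
    IsLatticeHomOn (D ×ˢ D ×ˢ D) (Prod.map f (Prod.map f f)) := by
  rintro ⟨x₀, x₁, x₂⟩ ⟨hx₀, hx₁, hx₂⟩ ⟨y₀, y₁, y₂⟩ ⟨hy₀, hy₁, hy₂⟩
  simp only [Prod.mk_sup_mk, Prod.mk_inf_mk, Prod.map_apply, (hf _ hx₀ _ hy₀).1,
    (hf _ hx₁ _ hy₁).1, (hf _ hx₂ _ hy₂).1, (hf _ hx₀ _ hy₀).2, (hf _ hx₁ _ hy₁).2,
    (hf _ hx₂ _ hy₂).2, and_self]

theorem exists_latticeHom_comp_eq {X : Type*} [Lattice X] {P : Set X} (hP : IsSublattice P)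
    {φ : X → E} {ψ : X → L} (hφ : IsLatticeHomOn P φ) (hψ : IsLatticeHomOn P ψ)
    (hφP : ∀ x, ∃ t ∈ P, φ t = x) (hker : ∀ t ∈ P, ∀ s ∈ P, φ t = φ s → ψ t = ψ s) :
    ∃ g : E → L, (∀ x y, g (x ⊔ y) = g x ⊔ g y ∧ g (x ⊓ y) = g x ⊓ g y) ∧
      ∀ t ∈ P, g (φ t) = ψ t := by
  choose r hrP hr using hφP
  have hgφ : ∀ t ∈ P, ψ (r (φ t)) = ψ t := fun t ht => hker _ (hrP _) t ht (hr _)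
  refine ⟨ψ ∘ r, fun x y => ⟨?_, ?_⟩, hgφ⟩
  · conv_lhs => rw [← hr x, ← hr y, ← (hφ _ (hrP x) _ (hrP y)).1]
    rw [Function.comp_apply, hgφ _ (hP.supClosed (hrP x) (hrP y)), (hψ _ (hrP x) _ (hrP y)).1]
    rfl
  · conv_lhs => rw [← hr x, ← hr y, ← (hφ _ (hrP x) _ (hrP y)).2]
    rw [Function.comp_apply, hgφ _ (hP.infClosed (hrP x) (hrP y)), (hψ _ (hrP x) _ (hrP y)).2]
    rfl

end HomOn

section TripleJoin

variable {K : Type*} [DistribLattice K] {a b : K}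

theorem Disjoint.sup_inf_inf_inf_left [OrderBot K] (hab : Disjoint a b) (x y : K) :
    (x ⊓ a ⊔ y ⊓ b) ⊓ a = x ⊓ a := by
  rw [inf_sup_right, inf_assoc, inf_idem, inf_assoc, hab.symm.eq_bot, inf_bot_eq, sup_bot_eq]

def tripleJoin (a b : K) (x : K × K × K) : K := x.1 ⊔ x.2.1 ⊓ a ⊔ x.2.2 ⊓ b

def IsNormalTriple (x : K × K × K) : Prop := x.1 ≤ x.2.1 ∧ x.1 ≤ x.2.2

theorem tripleJoin_inf_left [OrderBot K] (hab : Disjoint a b) {x : K × K × K}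
    (hx : IsNormalTriple x) : tripleJoin a b x ⊓ a = x.2.1 ⊓ a := by
  rw [tripleJoin, sup_assoc, inf_sup_right, hab.sup_inf_inf_inf_left, ← inf_sup_right,
    sup_eq_right.2 hx.1]

theorem tripleJoin_inf_right [OrderBot K] (hab : Disjoint a b) {x : K × K × K}
    (hx : IsNormalTriple x) : tripleJoin a b x ⊓ b = x.2.2 ⊓ b := by
  rw [tripleJoin, sup_assoc, sup_comm (x.2.1 ⊓ a), inf_sup_right,
    hab.symm.sup_inf_inf_inf_left, ← inf_sup_right, sup_eq_right.2 hx.2]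

theorem tripleJoin_sup_sup (x : K × K × K) : tripleJoin a b x ⊔ (a ⊔ b) = x.1 ⊔ (a ⊔ b) := by
  rw [tripleJoin, sup_sup_sup_comm, sup_assoc x.1,
    sup_eq_right.2 (inf_le_right : x.2.1 ⊓ a ≤ a), sup_eq_right.2 (inf_le_right : x.2.2 ⊓ b ≤ b),
    sup_assoc]

theorem tripleJoin_sup (x y : K × K × K) :
    tripleJoin a b (x ⊔ y) = tripleJoin a b x ⊔ tripleJoin a b y := by
  simp only [tripleJoin, Prod.fst_sup, Prod.snd_sup, inf_sup_right]
  ac_rfl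

theorem IsNormalTriple.sup {x y : K × K × K} (hx : IsNormalTriple x) (hy : IsNormalTriple y) :
    IsNormalTriple (x ⊔ y) :=
  ⟨sup_le_sup hx.1 hy.1, sup_le_sup hx.2 hy.2⟩

theorem IsNormalTriple.inf {x y : K × K × K} (hx : IsNormalTriple x) (hy : IsNormalTriple y) :
    IsNormalTriple (x ⊓ y) :=
  ⟨inf_le_inf hx.1 hy.1, inf_le_inf hx.2 hy.2⟩

theorem tripleJoin_inf [OrderBot K] (hab : Disjoint a b) {x y : K × K × K}
    (hx : IsNormalTriple x) (hy : IsNormalTriple y) :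
    tripleJoin a b (x ⊓ y) = tripleJoin a b x ⊓ tripleJoin a b y := by
  apply eq_of_inf_eq_sup_eq (a := a ⊔ b)
  · rw [inf_sup_left, inf_sup_left, tripleJoin_inf_left hab (hx.inf hy),
      tripleJoin_inf_right hab (hx.inf hy), inf_inf_distrib_right (tripleJoin a b x),
      inf_inf_distrib_right (tripleJoin a b x) _ b,
      tripleJoin_inf_left hab hx, tripleJoin_inf_left hab hy, tripleJoin_inf_right hab hx,
      tripleJoin_inf_right hab hy, ← inf_inf_distrib_right, ← inf_inf_distrib_right]
    rfl
  · rw [tripleJoin_sup_sup, sup_inf_right, tripleJoin_sup_sup, tripleJoin_sup_sup,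
      ← sup_inf_right]
    rfl

theorem isLatticeHomOn_tripleJoin [OrderBot K] (hab : Disjoint a b) :
    IsLatticeHomOn {x | IsNormalTriple x} (tripleJoin a b) := fun _ hx _ hy =>
  ⟨tripleJoin_sup _ _, tripleJoin_inf hab hx hy⟩

def normalTriples (D : Set K) : Set (K × K × K) := D ×ˢ D ×ˢ D ∩ {x | IsNormalTriple x}

theorem isSublattice_normalTriples {D : Set K} (hD : IsSublattice D) :
    IsSublattice (normalTriples D) :=
  (hD.prod (hD.prod hD)).inter ⟨fun _ hx _ hy => hx.sup hy, fun _ hx _ hy => hx.inf hy⟩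

end TripleJoin

section GeneralizedBooleanAlgebra

variable {C : Type*} [GeneralizedBooleanAlgebra C]

theorem sdiff_inf_sdiff_eq (x y u v : C) : x \ y ⊓ u \ v = (x ⊓ u) \ (y ⊔ v) := by
  rw [sdiff_sup, ← sdiff_inf_right_comm, inf_sdiff_assoc, inf_inf_inf_comm, inf_sdiff_left,
    inf_sdiff_right]

theorem sdiff_sdiff_sdiff_eq (x y u v : C) :
    (x \ y) \ (u \ v) = x \ (y ⊔ u) ⊔ (x ⊓ v) \ y := by
  rw [sdiff_sdiff_right', sdiff_sdiff_left, sdiff_inf_right_comm]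

theorem sdiff_le_sdiff_sup_iff {w v x y z : C} :
    w \ v ≤ x \ y ⊔ z ↔ w \ (v ⊔ x) ≤ z ∧ (w ⊓ y) \ v ≤ z := by
  rw [← sdiff_le_iff, sdiff_sdiff_sdiff_eq, sup_le_iff]

inductive IsSdiffJoin (S : Set C) : C → Prop
  | bot : IsSdiffJoin S ⊥
  | sdiff_sup {x y z : C} : x ∈ S → y ∈ S → IsSdiffJoin S z → IsSdiffJoin S (x \ y ⊔ z)

namespace IsSdiffJoin

variable {S : Set C} {z w : C}

theorem sup (hz : IsSdiffJoin S z) (hw : IsSdiffJoin S w) : IsSdiffJoin S (z ⊔ w) := by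
  induction hz with
  | bot => rwa [bot_sup_eq]
  | sdiff_sup hx hy _ ih => rw [sup_assoc]; exact sdiff_sup hx hy ih

theorem sdiff_inf (hS : IsSublattice S) {x y : C} (hx : x ∈ S)
    (hy : y ∈ S) (hw : IsSdiffJoin S w) : IsSdiffJoin S (x \ y ⊓ w) := by
  induction hw with
  | bot => rw [inf_bot_eq]; exact bot
  | sdiff_sup hu hv _ ih =>
    rw [inf_sup_left, sdiff_inf_sdiff_eq]
    exact sdiff_sup (hS.infClosed hx hu) (hS.supClosed hy hv) ih

theorem inf (hS : IsSublattice S) (hz : IsSdiffJoin S z)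
    (hw : IsSdiffJoin S w) : IsSdiffJoin S (z ⊓ w) := by
  induction hz with
  | bot => rw [bot_inf_eq]; exact bot
  | sdiff_sup hx hy _ ih => rw [inf_sup_right]; exact (sdiff_inf hS hx hy hw).sup ih

theorem sdiff_sdiff (hS : IsSublattice S) {x y : C} (hx : x ∈ S)
    (hy : y ∈ S) (hw : IsSdiffJoin S w) : IsSdiffJoin S ((x \ y) \ w) := by
  induction hw generalizing x y with
  | bot => rw [sdiff_bot, ← sup_bot_eq (x \ y)]; exact sdiff_sup hx hy bot
  | sdiff_sup hu hv _ ih =>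
    rw [← sdiff_sdiff_left, sdiff_sdiff_sdiff_eq, sup_sdiff]
    exact (ih hx (hS.supClosed hy hu)).sup (ih (hS.infClosed hx hv) hy)

theorem sdiff (hS : IsSublattice S) (hz : IsSdiffJoin S z)
    (hw : IsSdiffJoin S w) : IsSdiffJoin S (z \ w) := by
  induction hz with
  | bot => rw [bot_sdiff]; exact bot
  | sdiff_sup hx hy _ ih => rw [sup_sdiff]; exact (sdiff_sdiff hS hx hy hw).sup ih

theorem of_gbaClosure (hS0 : ⊥ ∈ S) (hS : IsSublattice S) (hz : GBAClosure S z) :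
    IsSdiffJoin S z := by
  induction hz with
  | @base x hx => rw [← sdiff_bot (a := x), ← sup_bot_eq (x \ ⊥)]; exact sdiff_sup hx hS0 bot
  | bot => exact bot
  | sup _ _ ihx ihy => exact ihx.sup ihy
  | inf _ _ ihx ihy => exact ihx.inf hS ihy
  | sdiff _ _ ihx ihy => exact ihx.sdiff hS ihy

theorem gbaClosure (hz : IsSdiffJoin S z) : GBAClosure S z := by
  induction hz with
  | bot => exact .bot
  | sdiff_sup hx hy _ ih => exact .sup (.sdiff (.base hx) (.base hy)) ih

end IsSdiffJoin

end GeneralizedBooleanAlgebra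

section GBAHomOn

variable {C M : Type*} [GeneralizedBooleanAlgebra C] [GeneralizedBooleanAlgebra M]

def IsGBAHomOn (S : Set C) (F : C → M) : Prop :=
  ∀ c c' : C, GBAClosure S c → GBAClosure S c' →
    F (c ⊔ c') = F c ⊔ F c' ∧ F (c ⊓ c') = F c ⊓ F c' ∧ F (c \ c') = F c \ F c'

namespace IsGBAHomOn

variable {S : Set C} {F : C → M}

theorem map_bot (hF : IsGBAHomOn S F) : F ⊥ = ⊥ := by
  simpa only [sdiff_self] using (hF ⊥ ⊥ .bot .bot).2.2

theorem monotoneOn (hF : IsGBAHomOn S F) : MonotoneOn F {c | GBAClosure S c} :=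
  fun x hx y hy hxy =>
  calc F x ≤ F x ⊔ F y := le_sup_left
    _ = F y := by rw [← (hF x y hx hy).1, sup_eq_right.2 hxy]

theorem map_le_inf_sup_inf {A B aB bB w x y : C} (hF : IsGBAHomOn S F) (hAB : Disjoint A B)
    (haB : IsGreatest {z | GBAClosure S z ∧ z ≤ A} aB)
    (hbB : IsGreatest {z | GBAClosure S z ∧ z ≤ B} bB)
    (habB : IsGreatest {z | GBAClosure S z ∧ z ≤ A ⊔ B} (aB ⊔ bB))
    (hw : GBAClosure S w) (hx : GBAClosure S x) (hy : GBAClosure S y)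
    (hwxy : w ≤ x ⊓ A ⊔ y ⊓ B) : F w ≤ F x ⊓ F aB ⊔ F y ⊓ F bB := by
  have hwab : w ≤ aB ⊔ bB := habB.2 ⟨hw, hwxy.trans (sup_le_sup inf_le_right inf_le_right)⟩
  have hwa : w ⊓ aB ≤ x :=
    calc w ⊓ aB ≤ (x ⊓ A ⊔ y ⊓ B) ⊓ A := inf_le_inf hwxy haB.1.2
      _ ≤ x := (hAB.sup_inf_inf_inf_left x y).trans_le inf_le_left
  have hwb : w ⊓ bB ≤ y :=
    calc w ⊓ bB ≤ (y ⊓ B ⊔ x ⊓ A) ⊓ B := inf_le_inf (hwxy.trans_eq (sup_comm _ _)) hbB.1.2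
      _ ≤ y := (hAB.symm.sup_inf_inf_inf_left y x).trans_le inf_le_left
  have hwle : w ≤ x ⊓ aB ⊔ y ⊓ bB :=
    calc w = w ⊓ aB ⊔ w ⊓ bB := by rw [← inf_sup_left, inf_eq_left.2 hwab]
      _ ≤ x ⊓ aB ⊔ y ⊓ bB :=
        sup_le_sup (le_inf hwa inf_le_right) (le_inf hwb inf_le_right)
  have hxa : GBAClosure S (x ⊓ aB) := .inf hx haB.1.1
  have hyb : GBAClosure S (y ⊓ bB) := .inf hy hbB.1.1
  calc F w ≤ F (x ⊓ aB ⊔ y ⊓ bB) := hF.monotoneOn hw (.sup hxa hyb) hwle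
    _ = F x ⊓ F aB ⊔ F y ⊓ F bB := by
      rw [(hF _ _ hxa hyb).1, (hF _ _ hx haB.1.1).2.1, (hF _ _ hy hbB.1.1).2.1]

end IsGBAHomOn

end GBAHomOn

section Extension

variable {E C L M : Type*} [DistribLattice E] [GeneralizedBooleanAlgebra C] [DistribLattice L]
  [GeneralizedBooleanAlgebra M] {D : Set E}

-- `x ⇨ y`, computed in `E`, exists and lies in `D`; `E` need not be a Heyting algebra.
def HimpClosed (D : Set E) : Prop :=
  ∀ x ∈ D, ∀ y ∈ D, ∃ z ∈ D, IsGreatest {w | x ⊓ w ≤ y} z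

theorem exists_mem_le_and_sdiff_le (hD : IsSublattice D) (hDhimp : HimpClosed D)
    (j : LatticeHom E C) (hj : Function.Injective j) {z : C} (hz : IsSdiffJoin (j '' D) z)
    (c : E) {v : E} (hv : v ∈ D) (hcz : j c \ j v ≤ z) : ∃ d ∈ D, c ≤ d ∧ j d \ j v ≤ z := by
  induction hz generalizing c v with
  | bot =>
    refine ⟨v, hv, (orderEmbeddingOfInjective j hj).le_iff_le.1 ?_, by rw [sdiff_self]⟩
    simpa [sdiff_eq_bot_iff] using hcz
  | @sdiff_sup _ _ z hx hy hz ih =>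
    obtain ⟨p, hp, rfl⟩ := hx
    obtain ⟨q, hq, rfl⟩ := hy
    rw [sdiff_le_sdiff_sup_iff, ← map_sup, ← map_inf] at hcz
    obtain ⟨d₁, hd₁, hcd₁, hd₁z⟩ := ih c (hD.supClosed hv hp) hcz.1
    obtain ⟨d₂, hd₂, hcd₂, hd₂z⟩ := ih (c ⊓ q) hv hcz.2
    obtain ⟨e, he, hqe, hemax⟩ := hDhimp q hq d₂ hd₂
    have hce : c ≤ e := hemax (show q ⊓ c ≤ d₂ by rwa [inf_comm])
    refine ⟨d₁ ⊓ e, hD.infClosed hd₁ he, le_inf hcd₁ hce, sdiff_le_sdiff_sup_iff.2 ⟨?_, ?_⟩⟩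
    · rw [← map_sup]
      exact (sdiff_le_sdiff_right (OrderHomClass.mono j inf_le_left)).trans hd₁z
    · rw [← map_inf]
      refine (sdiff_le_sdiff_right (OrderHomClass.mono j ?_)).trans hd₂z
      rw [inf_comm (d₁ ⊓ e)]
      exact (inf_le_inf_left q inf_le_right).trans hqe

theorem IsSdiffJoin.of_gbaClosure_image [OrderBot E] (hD0 : ⊥ ∈ D) (hD : IsSublattice D)
    (j : LatticeHom E C) (hj0 : j ⊥ = ⊥) {z : C} (hz : GBAClosure (j '' D) z) :
    IsSdiffJoin (j '' D) z :=
  .of_gbaClosure ⟨⊥, hD0, hj0⟩ (hD.image j) hz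

theorem exists_mem_map_eq_of_isLeast [OrderBot E] (hD0 : ⊥ ∈ D) (hD : IsSublattice D)
    (hDhimp : HimpClosed D) (j : LatticeHom E C) (hj : Function.Injective j) (hj0 : j ⊥ = ⊥)
    {c : E} {cT : C}
    (hcT : IsLeast {z | GBAClosure (j '' D) z ∧ j c ≤ z} cT) : ∃ d ∈ D, j d = cT := by
  obtain ⟨d, hd, hcd, hdT⟩ := exists_mem_le_and_sdiff_le hD hDhimp j hj
    (.of_gbaClosure_image hD0 hD j hj0 hcT.1.1) c hD0 (by rw [hj0, sdiff_bot]; exact hcT.1.2)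
  rw [hj0, sdiff_bot] at hdT
  exact ⟨d, hd, le_antisymm hdT (hcT.2 ⟨.base ⟨d, hd, rfl⟩, OrderHomClass.mono j hcd⟩)⟩

theorem isLeast_of_isLeast_map (j : LatticeHom E C) (hj : Function.Injective j) {c d : E}
    (hd : d ∈ D) (hcd : IsLeast {z | GBAClosure (j '' D) z ∧ j c ≤ z} (j d)) :
    IsLeast {e | e ∈ D ∧ c ≤ e} d := by
  refine ⟨⟨hd, (orderEmbeddingOfInjective j hj).le_iff_le.1 hcd.1.2⟩, fun e ⟨he, hce⟩ => ?_⟩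
  exact (orderEmbeddingOfInjective j hj).le_iff_le.1
    (hcd.2 ⟨.base ⟨e, he, rfl⟩, OrderHomClass.mono j hce⟩)

theorem IsGBAHomOn.map_le_of_le_map [OrderBot E] (hD0 : ⊥ ∈ D) (hD : IsSublattice D)
    (j : LatticeHom E C) (hj : Function.Injective j) (hj0 : j ⊥ = ⊥) (G : LatticeHom E M)
    {F : C → M} (hF : IsGBAHomOn (j '' D) F) (hFG : ∀ d ∈ D, F (j d) = G d) {z : C}
    (hz : GBAClosure (j '' D) z) {c : E} (hzc : z ≤ j c) : F z ≤ G c := by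
  suffices ∀ {z}, IsSdiffJoin (j '' D) z → z ≤ j c → F z ≤ G c from
    this (.of_gbaClosure_image hD0 hD j hj0 hz) hzc
  intro z hz hzc
  induction hz with
  | bot => rw [hF.map_bot]; exact bot_le
  | @sdiff_sup _ _ z hx hy hz ih =>
    obtain ⟨p, hp, rfl⟩ := hx
    obtain ⟨q, hq, rfl⟩ := hy
    have hjp : GBAClosure (j '' D) (j p) := .base ⟨p, hp, rfl⟩
    have hjq : GBAClosure (j '' D) (j q) := .base ⟨q, hq, rfl⟩
    rw [(hF _ _ (.sdiff hjp hjq) hz.gbaClosure).1, (hF _ _ hjp hjq).2.2, hFG p hp, hFG q hq]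
    refine sup_le ?_ (ih (le_sup_right.trans hzc))
    have hpqc : p ≤ q ⊔ c := (orderEmbeddingOfInjective j hj).le_iff_le.1
      (show j p ≤ j (q ⊔ c) by rw [map_sup, ← sdiff_le_iff]; exact le_sup_left.trans hzc)
    rw [sdiff_le_iff, ← map_sup]
    exact OrderHomClass.mono G hpqc

theorem inf_le_of_inf_le_of_isLeast (hDhimp : HimpClosed D) {c cD : E}
    (hcD : IsLeast {e | e ∈ D ∧ c ≤ e} cD) {d e : E} (hd : d ∈ D) (he : e ∈ D)
    (h : d ⊓ c ≤ e) : d ⊓ cD ≤ e := by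
  obtain ⟨z, hz, hdz, hzmax⟩ := hDhimp d hd e he
  exact (inf_le_inf_left d (hcD.2 ⟨hz, hzmax h⟩)).trans hdz

theorem IsLatticeHomOn.map_inf_le_map_inf (hD : IsSublattice D) (hDhimp : HimpClosed D)
    {f : E → L} (hf : IsLatticeHomOn D f) {c cD : E} (hcD : IsLeast {e | e ∈ D ∧ c ≤ e} cD) {γ : L}
    (hγ : γ ≤ f cD) {d e : E} (hd : d ∈ D) (he : e ∈ D) (h : d ⊓ c ≤ e) :
    f d ⊓ γ ≤ f e ⊓ γ :=
  calc f d ⊓ γ ≤ f d ⊓ f cD ⊓ γ := le_inf (le_inf inf_le_left (inf_le_right.trans hγ)) inf_le_right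
    _ = f (d ⊓ cD) ⊓ γ := by rw [(hf d hd cD hcD.1.1).2]
    _ ≤ f e ⊓ γ := inf_le_inf_right γ (hf.monotoneOn (hD.infClosed hd hcD.1.1) he
      (inf_le_of_inf_le_of_isLeast hDhimp hcD hd he h))

theorem le_tripleJoin_map_of_le [OrderBot E] (j : LatticeHom E C) (hj0 : j ⊥ = ⊥)
    (jL : LatticeHom L M) (hjL : Function.Injective jL) {f : E → L} {F : C → M}
    (hF : IsGBAHomOn (j '' D) F) (hFj : ∀ x ∈ D, F (j x) = jL (f x)) {a b : E}
    (hab : Disjoint a b) {aB bB : C} (haB : IsGreatest {z | GBAClosure (j '' D) z ∧ z ≤ j a} aB)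
    (hbB : IsGreatest {z | GBAClosure (j '' D) z ∧ z ≤ j b} bB)
    (habB : IsGreatest {z | GBAClosure (j '' D) z ∧ z ≤ j (a ⊔ b)} (aB ⊔ bB)) {α β : L}
    (hFaB : F aB ≤ jL α) (hFbB : F bB ≤ jL β) {d : E} (hd : d ∈ D) {s : E × E × E}
    (hs : s ∈ D ×ˢ D ×ˢ D) (hds : d ≤ tripleJoin a b s) :
    f d ≤ tripleJoin α β (Prod.map f (Prod.map f f) s) := by
  obtain ⟨hs₀, hs₁, hs₂⟩ := hs
  have hjab : Disjoint (j a) (j b) := disjoint_iff.2 (by rw [← map_inf, hab.eq_bot, hj0])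
  have hjD : ∀ x ∈ D, GBAClosure (j '' D) (j x) := fun x hx => .base ⟨x, hx, rfl⟩
  have hw : j d \ j s.1 ≤ j s.2.1 ⊓ j a ⊔ j s.2.2 ⊓ j b := by
    rw [sdiff_le_iff]
    simpa only [tripleJoin, map_sup, map_inf, sup_assoc] using OrderHomClass.mono j hds
  have key := hF.map_le_inf_sup_inf hjab haB hbB (by rwa [← map_sup])
    (.sdiff (hjD _ hd) (hjD _ hs₀)) (hjD _ hs₁) (hjD _ hs₂) hw
  rw [(hF _ _ (hjD _ hd) (hjD _ hs₀)).2.2, hFj _ hd, hFj _ hs₀, hFj _ hs₁, hFj _ hs₂,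
    sdiff_le_iff] at key
  refine (orderEmbeddingOfInjective jL hjL).le_iff_le.1 ?_
  simp only [orderEmbeddingOfInjective_apply, tripleJoin, Prod.map_fst, Prod.map_snd, map_sup,
    map_inf, sup_assoc]
  exact key.trans (sup_le_sup_left (sup_le_sup (inf_le_inf_left _ hFaB) (inf_le_inf_left _ hFbB)) _)

theorem tripleJoin_map_le_of_le [OrderBot E] (hD : IsSublattice D) (hDhimp : HimpClosed D)
    (j : LatticeHom E C) (hj0 : j ⊥ = ⊥) (jL : LatticeHom L M) (hjL : Function.Injective jL)
    {f : E → L} (hf : IsLatticeHomOn D f) {F : C → M} (hF : IsGBAHomOn (j '' D) F)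
    (hFj : ∀ x ∈ D, F (j x) = jL (f x)) {a b : E} (hab : Disjoint a b) {aD bD : E}
    (haD : IsLeast {e | e ∈ D ∧ a ≤ e} aD) (hbD : IsLeast {e | e ∈ D ∧ b ≤ e} bD) {aB bB : C}
    (haB : IsGreatest {z | GBAClosure (j '' D) z ∧ z ≤ j a} aB)
    (hbB : IsGreatest {z | GBAClosure (j '' D) z ∧ z ≤ j b} bB)
    (habB : IsGreatest {z | GBAClosure (j '' D) z ∧ z ≤ j (a ⊔ b)} (aB ⊔ bB)) {α β : L}
    (hα : α ≤ f aD) (hβ : β ≤ f bD) (hFaB : F aB ≤ jL α) (hFbB : F bB ≤ jL β)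
    ⦃t s : E × E × E⦄ (ht : t ∈ D ×ˢ D ×ˢ D) (hs : s ∈ normalTriples D)
    (hts : tripleJoin a b t ≤ tripleJoin a b s) :
    tripleJoin α β (Prod.map f (Prod.map f f) t) ≤
      tripleJoin α β (Prod.map f (Prod.map f f) s) := by
  obtain ⟨⟨hs₀, hs₁, hs₂⟩, hsN⟩ := hs
  obtain ⟨ht₀, ht₁, ht₂⟩ := ht
  have hta : t.2.1 ⊓ a ≤ s.2.1 :=
    calc t.2.1 ⊓ a ≤ tripleJoin a b s ⊓ a :=
          le_inf ((show t.2.1 ⊓ a ≤ tripleJoin a b t from le_sup_right.trans le_sup_left).trans hts)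
            inf_le_right
      _ ≤ s.2.1 := (tripleJoin_inf_left hab hsN).trans_le inf_le_left
  have htb : t.2.2 ⊓ b ≤ s.2.2 :=
    calc t.2.2 ⊓ b ≤ tripleJoin a b s ⊓ b :=
          le_inf ((show t.2.2 ⊓ b ≤ tripleJoin a b t from le_sup_right).trans hts) inf_le_right
      _ ≤ s.2.2 := (tripleJoin_inf_right hab hsN).trans_le inf_le_left
  refine sup_le (sup_le ?_ ?_) ?_
  · exact le_tripleJoin_map_of_le j hj0 jL hjL hF hFj hab haB hbB habB hFaB hFbB ht₀
      ⟨hs₀, hs₁, hs₂⟩ ((show t.1 ≤ tripleJoin a b t from le_sup_left.trans le_sup_left).trans hts)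
  · exact (hf.map_inf_le_map_inf hD hDhimp haD hα ht₁ hs₁ hta).trans
      (le_sup_right.trans le_sup_left)
  · exact (hf.map_inf_le_map_inf hD hDhimp hbD hβ ht₂ hs₂ htb).trans le_sup_right

theorem exists_mem_normalTriples_tripleJoin_eq [OrderBot E] (hD0 : ⊥ ∈ D)
    (hD : IsSublattice D) {a b aD bD : E} (hab : Disjoint a b) (haD : aD ∈ D ∧ a ≤ aD)
    (hbD : bD ∈ D ∧ b ≤ bD) {x : E} (hx : LatClosure (D ∪ {a, b}) x) :
    ∃ t ∈ normalTriples D, tripleJoin a b t = x := by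
  induction hx with
  | @base x hx =>
    rcases hx with hx | rfl | rfl
    · exact ⟨(x, x, x), ⟨⟨hx, hx, hx⟩, le_rfl, le_rfl⟩, by simp [tripleJoin]⟩
    · exact ⟨(⊥, aD, ⊥), ⟨⟨hD0, haD.1, hD0⟩, bot_le, bot_le⟩, by simp [tripleJoin, haD.2]⟩
    · exact ⟨(⊥, ⊥, bD), ⟨⟨hD0, hD0, hbD.1⟩, bot_le, bot_le⟩, by simp [tripleJoin, hbD.2]⟩
  | sup _ _ ihx ihy =>
    obtain ⟨t, ht, rfl⟩ := ihx
    obtain ⟨s, hs, rfl⟩ := ihy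
    exact ⟨t ⊔ s, (isSublattice_normalTriples hD).supClosed ht hs, tripleJoin_sup t s⟩
  | inf _ _ ihx ihy =>
    obtain ⟨t, ht, rfl⟩ := ihx
    obtain ⟨s, hs, rfl⟩ := ihy
    exact ⟨t ⊓ s, (isSublattice_normalTriples hD).infClosed ht hs, tripleJoin_inf hab ht.2 hs.2⟩

theorem exists_latticeHom_extension [OrderBot E] [OrderBot L] (hD0 : ⊥ ∈ D)
    (hD : IsSublattice D) (hDhimp : HimpClosed D)
    (j : LatticeHom E C) (hj0 : j ⊥ = ⊥) (jL : LatticeHom L M) (hjL : Function.Injective jL)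
    {f : E → L} (hf : IsLatticeHomOn D f) (hf0 : f ⊥ = ⊥) {F : C → M}
    (hF : IsGBAHomOn (j '' D) F) (hFj : ∀ x ∈ D, F (j x) = jL (f x)) {a b : E}
    (hgen : ∀ x, LatClosure (D ∪ {a, b}) x) (hab : Disjoint a b) {aD bD : E}
    (haD : IsLeast {e | e ∈ D ∧ a ≤ e} aD) (hbD : IsLeast {e | e ∈ D ∧ b ≤ e} bD) {aB bB : C}
    (haB : IsGreatest {z | GBAClosure (j '' D) z ∧ z ≤ j a} aB)
    (hbB : IsGreatest {z | GBAClosure (j '' D) z ∧ z ≤ j b} bB)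
    (habB : IsGreatest {z | GBAClosure (j '' D) z ∧ z ≤ j (a ⊔ b)} (aB ⊔ bB)) {α β : L}
    (hα : α ≤ f aD) (hβ : β ≤ f bD) (hαβ : Disjoint α β) (hFaB : F aB ≤ jL α)
    (hFbB : F bB ≤ jL β) :
    ∃ g : E → L, (∀ x y, g (x ⊔ y) = g x ⊔ g y ∧ g (x ⊓ y) = g x ⊓ g y) ∧
      (∀ x ∈ D, g x = f x) ∧ g a = α ∧ g b = β := by
  have hmono := tripleJoin_map_le_of_le hD hDhimp j hj0 jL hjL hf hF hFj hab haD hbD haB hbB habB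
    hα hβ hFaB hFbB
  have hψ : IsLatticeHomOn (normalTriples D) (tripleJoin α β ∘ Prod.map f (Prod.map f f)) :=
    (isLatticeHomOn_tripleJoin hαβ).comp (hf.prodMap.mono Set.inter_subset_left) fun t ht =>
      ⟨hf.monotoneOn ht.1.1 ht.1.2.1 ht.2.1, hf.monotoneOn ht.1.1 ht.1.2.2 ht.2.2⟩
  obtain ⟨g, hg, hgt⟩ := exists_latticeHom_comp_eq (isSublattice_normalTriples hD)
    ((isLatticeHomOn_tripleJoin hab).mono Set.inter_subset_right) hψ
    (fun x => exists_mem_normalTriples_tripleJoin_eq hD0 hD hab haD.1 hbD.1 (hgen x))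
    (fun t ht s hs h => le_antisymm (hmono ht.1 hs h.le) (hmono hs.1 ht h.ge))
  refine ⟨g, hg, fun x hx => ?_, ?_, ?_⟩
  · simpa [tripleJoin] using hgt (x, x, x) ⟨⟨hx, hx, hx⟩, le_rfl, le_rfl⟩
  · simpa [tripleJoin, hf0, haD.1.2, hα] using
      hgt (⊥, aD, ⊥) ⟨⟨hD0, haD.1.1, hD0⟩, bot_le, bot_le⟩
  · simpa [tripleJoin, hf0, hbD.1.2, hβ] using
      hgt (⊥, ⊥, bD) ⟨⟨hD0, hD0, hbD.1.1⟩, bot_le, bot_le⟩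

end Extension

theorem stmt6_general {E C L M : Type*}
    [DistribLattice E] [BoundedOrder E] [DistribLattice L] [OrderBot L]
    [GeneralizedBooleanAlgebra C] [GeneralizedBooleanAlgebra M]
    (D : Set E) (hDbot : ⊥ ∈ D)
    (hDsup : ∀ x ∈ D, ∀ y ∈ D, x ⊔ y ∈ D) (hDinf : ∀ x ∈ D, ∀ y ∈ D, x ⊓ y ∈ D)
    (hSH : ∀ x ∈ D, ∀ y ∈ D, ∃ z ∈ D, IsGreatest {w : E | x ⊓ w ≤ y} z)
    (j : E → C) (hjinj : Function.Injective j)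
    (hjhom : ∀ x y : E, j (x ⊔ y) = j x ⊔ j y ∧ j (x ⊓ y) = j x ⊓ j y)
    (hjbot : j ⊥ = ⊥)
    (a b : E)
    (hgenE : ∀ x : E, LatClosure (D ∪ {a, b}) x)
    (hab : a ⊓ b = ⊥)
    (aB bB abB aT bT : C)
    (haB : IsGreatest {z : C | GBAClosure (j '' D) z ∧ z ≤ j a} aB)
    (hbB : IsGreatest {z : C | GBAClosure (j '' D) z ∧ z ≤ j b} bB)
    (habB : IsGreatest {z : C | GBAClosure (j '' D) z ∧ z ≤ j (a ⊔ b)} abB)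
    (haT : IsLeast {z : C | GBAClosure (j '' D) z ∧ j a ≤ z} aT)
    (hbT : IsLeast {z : C | GBAClosure (j '' D) z ∧ j b ≤ z} bT)
    (habB4 : abB = aB ⊔ bB)
    (f : E → L)
    (hfD : ∀ x ∈ D, ∀ y ∈ D, f (x ⊔ y) = f x ⊔ f y ∧ f (x ⊓ y) = f x ⊓ f y)
    (hf0 : f ⊥ = ⊥)
    (jL : L → M) (hjLinj : Function.Injective jL)
    (hjLhom : ∀ x y : L, jL (x ⊔ y) = jL x ⊔ jL y ∧ jL (x ⊓ y) = jL x ⊓ jL y)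
    (F : C → M)
    (hFj : ∀ x ∈ D, F (j x) = jL (f x))
    (hFhom : ∀ c c' : C, GBAClosure (j '' D) c → GBAClosure (j '' D) c' →
      F (c ⊔ c') = F c ⊔ F c' ∧ F (c ⊓ c') = F c ⊓ F c' ∧ F (c \ c') = F c \ F c') :
    ((∃ d ∈ D, j d = aT) ∧ (∃ d ∈ D, j d = bT) ∧
      (∃ d ∈ D, IsLeast {z : C | GBAClosure (j '' D) z ∧ j (a ⊔ b) ≤ z} (j d))) ∧
    (∀ α β : L,
      (∃ g : E → L,
          (∀ x y : E, g (x ⊔ y) = g x ⊔ g y ∧ g (x ⊓ y) = g x ⊓ g y) ∧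
          (∀ x ∈ D, g x = f x) ∧ g a = α ∧ g b = β) ↔
        ((∀ d ∈ D, j d = aT → α ≤ f d) ∧ (∀ d ∈ D, j d = bT → β ≤ f d) ∧
          α ⊓ β = ⊥ ∧ F aB ≤ jL α ∧ F bB ≤ jL β)) := by
  have hD : IsSublattice D := ⟨fun x hx y hy => hDsup x hx y hy, fun x hx y hy => hDinf x hx y hy⟩
  let jh : LatticeHom E C := ⟨⟨j, fun x y => (hjhom x y).1⟩, fun x y => (hjhom x y).2⟩
  let jLh : LatticeHom L M := ⟨⟨jL, fun x y => (hjLhom x y).1⟩, fun x y => (hjLhom x y).2⟩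
  obtain ⟨aD, haD, rfl⟩ := exists_mem_map_eq_of_isLeast hDbot hD hSH jh hjinj hjbot haT
  obtain ⟨bD, hbD, rfl⟩ := exists_mem_map_eq_of_isLeast hDbot hD hSH jh hjinj hjbot hbT
  have haD' := isLeast_of_isLeast_map jh hjinj haD haT
  have hbD' := isLeast_of_isLeast_map jh hjinj hbD hbT
  refine ⟨⟨⟨aD, haD, rfl⟩, ⟨bD, hbD, rfl⟩, aD ⊔ bD, hDsup _ haD _ hbD, ?_⟩, fun α β => ⟨?_, ?_⟩⟩
  · rw [(hjhom a b).1, (hjhom aD bD).1]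
    exact isLeast_sup_of_isLeast (fun _ _ => .sup) haT hbT
  · rintro ⟨g, hg, hgD, rfl, rfl⟩
    let gh : LatticeHom E L := ⟨⟨g, fun x y => (hg x y).1⟩, fun x y => (hg x y).2⟩
    have hFg : ∀ d ∈ D, F (j d) = jLh.comp gh d := fun d hd => by
      rw [hFj d hd, ← hgD d hd]; rfl
    refine ⟨fun d hd hjd => ?_, fun d hd hjd => ?_, ?_, ?_, ?_⟩
    · rw [hjinj hjd, ← hgD aD haD]; exact OrderHomClass.mono gh haD'.1.2
    · rw [hjinj hjd, ← hgD bD hbD]; exact OrderHomClass.mono gh hbD'.1.2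
    · rw [← (hg a b).2, hab, hgD ⊥ hDbot, hf0]
    · exact IsGBAHomOn.map_le_of_le_map hDbot hD jh hjinj hjbot _ hFhom hFg haB.1.1 haB.1.2
    · exact IsGBAHomOn.map_le_of_le_map hDbot hD jh hjinj hjbot _ hFhom hFg hbB.1.1 hbB.1.2
  · rintro ⟨hα, hβ, hαβ, hFaB, hFbB⟩
    exact exists_latticeHom_extension hDbot hD hSH jh hjbot jLh hjLinj hfD hf0 hFhom hFj hgenE
      (disjoint_iff.2 hab) haD' hbD' haB hbB (habB4 ▸ habB) (hα _ haD rfl) (hβ _ hbD rfl)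
      (disjoint_iff.2 hαβ) hFaB hFbB

/-- Main Extension Lemma, first part: `D` is a semi-Heyting `0,1`-sublattice
of the bounded distributive lattice `E` (for `x, y ∈ D` the implication `x →_E y` exists
and lies in `D`); the Boolean envelope `BR(E)` is represented by a generalized Boolean
algebra `C` with a generating `0`-lattice embedding `j : E → C`, and `B = BR(D)` is the
generalized Boolean subalgebra of `C` generated by `j '' D`.  `aB, bB, abB` are
`a_B, b_B, (a ⊔ b)_B` and `aT, bT` are `a^B, b^B`.  `BR(L)` is represented by `(M, jL)`
and `F : C → M` restricts on `B` to `BR(f)`.  Conclusion: `c^B ∈ D` for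
`c ∈ {a, b, a ⊔ b}`, and `(α, β)` arises from a lattice homomorphism `g : E → L`
extending `f` with `g a = α`, `g b = β` iff condition (ii) holds. -/
theorem stmt6 {E C L M : Type*}
    [DistribLattice E] [BoundedOrder E] [DistribLattice L] [OrderBot L]
    [GeneralizedBooleanAlgebra C] [GeneralizedBooleanAlgebra M]
    (D : Set E) (hDbot : ⊥ ∈ D) (hDtop : ⊤ ∈ D)
    (hDsup : ∀ x ∈ D, ∀ y ∈ D, x ⊔ y ∈ D) (hDinf : ∀ x ∈ D, ∀ y ∈ D, x ⊓ y ∈ D)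
    (hSH : ∀ x ∈ D, ∀ y ∈ D, ∃ z ∈ D, IsGreatest {w : E | x ⊓ w ≤ y} z)
    (j : E → C) (hjinj : Function.Injective j)
    (hjhom : ∀ x y : E, j (x ⊔ y) = j x ⊔ j y ∧ j (x ⊓ y) = j x ⊓ j y)
    (hjbot : j ⊥ = ⊥) (hjgen : ∀ c : C, GBAClosure (Set.range j) c)
    (a b : E)
    (hgenE : ∀ x : E, LatClosure (D ∪ {a, b}) x)
    (hab : a ⊓ b = ⊥)
    (aB bB abB aT bT : C)
    (haB : IsGreatest {z : C | GBAClosure (j '' D) z ∧ z ≤ j a} aB)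
    (hbB : IsGreatest {z : C | GBAClosure (j '' D) z ∧ z ≤ j b} bB)
    (habB : IsGreatest {z : C | GBAClosure (j '' D) z ∧ z ≤ j (a ⊔ b)} abB)
    (haT : IsLeast {z : C | GBAClosure (j '' D) z ∧ j a ≤ z} aT)
    (hbT : IsLeast {z : C | GBAClosure (j '' D) z ∧ j b ≤ z} bT)
    (habB4 : abB = aB ⊔ bB)
    (f : E → L)
    (hfD : ∀ x ∈ D, ∀ y ∈ D, f (x ⊔ y) = f x ⊔ f y ∧ f (x ⊓ y) = f x ⊓ f y)
    (hf0 : f ⊥ = ⊥)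
    (jL : L → M) (hjLinj : Function.Injective jL)
    (hjLhom : ∀ x y : L, jL (x ⊔ y) = jL x ⊔ jL y ∧ jL (x ⊓ y) = jL x ⊓ jL y)
    (hjLbot : jL ⊥ = ⊥) (hjLgen : ∀ m : M, GBAClosure (Set.range jL) m)
    (F : C → M)
    (hFj : ∀ x ∈ D, F (j x) = jL (f x))
    (hFhom : ∀ c c' : C, GBAClosure (j '' D) c → GBAClosure (j '' D) c' →
      F (c ⊔ c') = F c ⊔ F c' ∧ F (c ⊓ c') = F c ⊓ F c' ∧ F (c \ c') = F c \ F c')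
    (hF0 : F ⊥ = ⊥) :
    ((∃ d ∈ D, j d = aT) ∧ (∃ d ∈ D, j d = bT) ∧
      (∃ d ∈ D, IsLeast {z : C | GBAClosure (j '' D) z ∧ j (a ⊔ b) ≤ z} (j d))) ∧
    (∀ α β : L,
      (∃ g : E → L,
          (∀ x y : E, g (x ⊔ y) = g x ⊔ g y ∧ g (x ⊓ y) = g x ⊓ g y) ∧
          (∀ x ∈ D, g x = f x) ∧ g a = α ∧ g b = β) ↔
        ((∀ d ∈ D, j d = aT → α ≤ f d) ∧ (∀ d ∈ D, j d = bT → β ≤ f d) ∧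
          α ⊓ β = ⊥ ∧ F aB ≤ jL α ∧ F bB ≤ jL β)) :=
  stmt6_general D hDbot hDsup hDinf hSH j hjinj hjhom hjbot a b hgenE hab aB bB abB aT bT haB hbB
    habB haT hbT habB4 f hfD hf0 jL hjLinj hjLhom F hFj hFhom
end

section
/- Let D be a finite distributive lattice, L a distributive lattice with least element 0, f : D → L a join-homomorphism, and e⃗ = (e_p)_{p ∈ Ji(D)} a consonance kernel for f. Then f(x) = f(x ∧ y) ∨ (x ⊘_{e⃗} y) for all x, y ∈ D. Moreover, f is a lattice homomorphism. -/
open scoped Classical in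
/-- `x ⊘_e y := ⋁ {e p : p join-irreducible, p ≤ x, p ≰ y}` (a finite join in `L`). -/
noncomputable def oslash {D L : Type*} [Lattice D] [Fintype D]
    [SemilatticeSup L] [OrderBot L] (e : D → L) (x y : D) : L :=
  (Finset.univ.filter fun p : D => SupIrred p ∧ p ≤ x ∧ ¬ p ≤ y).sup e

/-!
Every element of a finite lattice is reached from `⊥` by binary joins and by the steps
`p_* < p` at join-irreducibles `p`. Along this induction `f z ≤ f (x ⊓ y) ⊔ (x ⊘ y)` for all
`z ≤ x`: a join-irreducible `p ≤ x` either lies below `y`, or its kernel element `e_p` is one of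
the joinands of `x ⊘ y`. The reverse inequality holds because `e_p ≤ f p`.
Distributivity of `L` then gives `f x ⊓ f y = f (x ⊓ y) ⊔ ((x ⊘ y) ⊓ (y ⊘ x))`, and the last
meet vanishes because a join-irreducible below `x` but not `y` is incomparable with one below
`y` but not `x`.
-/

theorem WellFoundedLT.induction_supIrred {α : Type*} [SemilatticeSup α] [OrderBot α]
    [WellFoundedLT α] {P : α → Prop} (bot : P ⊥) (sup : ∀ a b, P a → P b → P (a ⊔ b))
    (supIrred : ∀ a, SupIrred a → (∀ b < a, P b) → P a) (a : α) : P a := by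
  induction a using WellFoundedLT.induction with
  | _ a ih =>
    by_cases ha : SupIrred a
    · exact supIrred a ha ih
    rcases not_supIrred.1 ha with hmin | ⟨b, c, rfl, hb, hc⟩
    · exact hmin.eq_bot ▸ bot
    · exact sup b c (ih b hb) (ih c hc)

section Oslash

variable {D L : Type*} [Lattice D] [Fintype D]

theorem le_oslash [SemilatticeSup L] [OrderBot L] (e : D → L) {p x y : D} (hp : SupIrred p)
    (hpx : p ≤ x) (hpy : ¬p ≤ y) : e p ≤ oslash e x y := by
  classical
  exact Finset.le_sup (by simp [hp, hpx, hpy])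

theorem oslash_le [SemilatticeSup L] [OrderBot L] {e : D → L} {x y : D} {a : L}
    (h : ∀ p, SupIrred p → p ≤ x → ¬p ≤ y → e p ≤ a) : oslash e x y ≤ a := by
  classical
  exact Finset.sup_le fun p hp => by
    simp only [Finset.mem_filter, Finset.mem_univ, true_and] at hp
    exact h p hp.1 hp.2.1 hp.2.2

theorem disjoint_oslash_oslash [DistribLattice L] [OrderBot L] {e : D → L}
    (he : ∀ p q, SupIrred p → SupIrred q → ¬p ≤ q → ¬q ≤ p → e p ⊓ e q = ⊥) (x y : D) :
    Disjoint (oslash e x y) (oslash e y x) := by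
  classical
  refine Finset.disjoint_sup_left.2 fun p hp => Finset.disjoint_sup_right.2 fun q hq => ?_
  simp only [Finset.mem_filter, Finset.mem_univ, true_and] at hp hq
  exact disjoint_iff.2 <| he p q hp.1 hq.1 (fun hpq => hp.2.2 (hpq.trans hq.2.1))
    (fun hqp => hq.2.2 (hqp.trans hp.2.1))

theorem map_eq_map_inf_sup_oslash [OrderBot D] [SemilatticeSup L] [OrderBot L] {f e : D → L}
    (hf : ∀ x y, f (x ⊔ y) = f x ⊔ f y) (pstar : D → D)
    (hpstar : ∀ p, SupIrred p → pstar p < p) (he : ∀ p, SupIrred p → f p = f (pstar p) ⊔ e p)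
    (x y : D) : f x = f (x ⊓ y) ⊔ oslash e x y := by
  have hmono : Monotone f := OrderHomClass.mono (SupHom.mk f hf)
  refine le_antisymm ?_ <| sup_le (hmono inf_le_left) <| oslash_le fun p hp hpx _ =>
    calc e p ≤ f p := (he p hp).symm ▸ le_sup_right
      _ ≤ f x := hmono hpx
  suffices ∀ z ≤ x, f z ≤ f (x ⊓ y) ⊔ oslash e x y from this x le_rfl
  refine WellFoundedLT.induction_supIrred ?_ ?_ ?_
  · exact fun _ => le_sup_of_le_left (hmono bot_le)
  · intro a b ha hb hab
    rw [hf]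
    exact sup_le (ha (le_sup_left.trans hab)) (hb (le_sup_right.trans hab))
  · intro p hp ih hpx
    by_cases hpy : p ≤ y
    · exact le_sup_of_le_left (hmono (le_inf hpx hpy))
    rw [he p hp]
    exact sup_le (ih _ (hpstar p hp) ((hpstar p hp).le.trans hpx))
      (le_sup_of_le_right (le_oslash e hp hpx hpy))

end Oslash

/-- if `e` is a consonance kernel for the join-homomorphism `f`, then
`f x = f (x ⊓ y) ⊔ (x ⊘_e y)` for all `x, y`, and moreover `f` is a lattice homomorphism.
Here `pstar p` is the unique lower cover `p_*` of a join-irreducible `p`, characterized as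
the greatest element strictly below `p`. -/
theorem stmt8 {D L : Type*} [DistribLattice D] [OrderBot D] [Fintype D]
    [DistribLattice L] [OrderBot L]
    (f : D → L) (hf : ∀ x y : D, f (x ⊔ y) = f x ⊔ f y)
    (pstar : D → D) (hpstar : ∀ p : D, SupIrred p → IsGreatest {x : D | x < p} (pstar p))
    (e : D → L)
    (hker1 : ∀ p : D, SupIrred p → f p = f (pstar p) ⊔ e p)
    (hker2 : ∀ p q : D, SupIrred p → SupIrred q → ¬ p ≤ q → ¬ q ≤ p → e p ⊓ e q = ⊥) :
    (∀ x y : D, f x = f (x ⊓ y) ⊔ oslash e x y) ∧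
    (∀ x y : D, f (x ⊓ y) = f x ⊓ f y) := by
  have decomp := map_eq_map_inf_sup_oslash hf pstar (fun p hp => (hpstar p hp).1) hker1
  refine ⟨decomp, fun x y => ?_⟩
  rw [decomp x y, decomp y x, inf_comm y x, ← sup_inf_left,
    (disjoint_oslash_oslash hker2 x y).eq_bot, sup_bot_eq]
end

section
/- Let D be a finite distributive lattice, L a distributive lattice with least element 0, and f : D → L a lattice homomorphism. Then f has a consonance kernel if and only if the range of f is consonant in L. -/
/-!
If `e` is a consonance kernel, then for `x, y ∈ D` the joins `u` of the `e p` over the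
join-irreducibles `p ≤ x`, `p ≰ y`, and `v` of those over `p ≤ y`, `p ≰ x`, witness the consonance
of `f x` and `f y`: `u ⊓ v = ⊥` because every such pair is incomparable, and `f x ≤ u ⊔ f y`
follows by induction along `D`, peeling `f p = f p_* ⊔ e p` off each join-irreducible.

Conversely, choose consonance witnesses `f p ≤ u p q ⊔ f q`, `f q ≤ f p ⊔ v p q`,
`u p q ⊓ v p q = ⊥` for all pairs, and let `e p` be the meet of `f p` with all `u p q ⊓ v q p`
for `q` incomparable to `p`. Disjointness is then immediate, and `f p ≤ f p_* ⊔ e p` holds because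
`f p ⊓ f q = f (p ⊓ q) ≤ f p_*` for every such `q`.
-/

open Finset

section

variable {D L : Type*}

def Consonant [Lattice L] [OrderBot L] (a b : L) : Prop :=
  ∃ u v : L, a ≤ u ⊔ b ∧ b ≤ a ⊔ v ∧ u ⊓ v = ⊥

/-- `pstar p` plays the role of the lower cover `p_*` of a join-irreducible `p`. -/
def IsConsonanceKernel [SemilatticeSup D] [Lattice L] [OrderBot L] (f : D → L) (pstar : D → D)
    (e : D → L) : Prop :=
  (∀ p, SupIrred p → f p = f (pstar p) ⊔ e p) ∧
    ∀ p q, SupIrred p → SupIrred q → ¬ p ≤ q → ¬ q ≤ p → e p ⊓ e q = ⊥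

theorem le_sup_of_le_sup_of_inf_le {α : Type*} [DistribLattice α] {a b c u : α}
    (h : a ≤ b ⊔ u) (hab : a ⊓ b ≤ c) : a ≤ c ⊔ u :=
  calc a = a ⊓ (b ⊔ u) := (inf_eq_left.2 h).symm
    _ = a ⊓ b ⊔ a ⊓ u := inf_sup_left _ _ _
    _ ≤ c ⊔ u := sup_le_sup hab inf_le_right

theorem SupIrred.induction [Lattice D] [WellFoundedLT D] {P : D → Prop}
    (isMin : ∀ a, IsMin a → P a) (sup : ∀ a b, P a → P b → P (a ⊔ b))
    (supIrred : ∀ a, SupIrred a → (∀ b < a, P b) → P a) (a : D) : P a := by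
  induction a using WellFoundedLT.induction with
  | _ a ih =>
    by_cases ha : SupIrred a
    · exact supIrred a ha ih
    obtain hmin | ⟨b, c, rfl, hb, hc⟩ := not_supIrred.1 ha
    · exact isMin a hmin
    · exact sup b c (ih b hb) (ih c hc)

section KernelToConsonance

variable [Lattice D] {pstar : D → D}

theorem SupHom.apply_le_sup_apply_of_kernel_le [WellFoundedLT D] [SemilatticeSup L]
    (f : SupHom D L) {e : D → L}
    (hpstar : ∀ p, SupIrred p → pstar p < p) (he : ∀ p, SupIrred p → f p = f (pstar p) ⊔ e p)
    {x y : D} {w : L} (hw : ∀ p, SupIrred p → p ≤ x → ¬ p ≤ y → e p ≤ w) : f x ≤ w ⊔ f y := by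
  suffices ∀ z, z ≤ x → f z ≤ w ⊔ f y from this x le_rfl
  have below_y : ∀ z, z ≤ y → f z ≤ w ⊔ f y := fun z hz =>
    le_sup_of_le_right (OrderHomClass.mono f hz)
  refine SupIrred.induction (fun z hz _ => below_y z (hz inf_le_left |>.trans inf_le_right))
    (fun a b ha hb hab => ?_) (fun p hp ih hpx => ?_)
  · rw [map_sup]
    exact sup_le (ha (le_sup_left.trans hab)) (hb (le_sup_right.trans hab))
  · by_cases hpy : p ≤ y
    · exact below_y p hpy
    calc f p = f (pstar p) ⊔ e p := he p hp
      _ ≤ (w ⊔ f y) ⊔ w :=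
        sup_le_sup (ih _ (hpstar p hp) ((hpstar p hp).le.trans hpx)) (hw p hp hpx hpy)
      _ = w ⊔ f y := by rw [sup_comm, ← sup_assoc, sup_idem]

theorem IsConsonanceKernel.consonant [Fintype D] [DistribLattice L] [OrderBot L] {e : D → L}
    (f : SupHom D L) (hpstar : ∀ p, SupIrred p → pstar p < p) (he : IsConsonanceKernel f pstar e)
    (x y : D) : Consonant (f x) (f y) := by
  classical
  let S : D → D → L := fun x y => (univ.filter fun p => SupIrred p ∧ p ≤ x ∧ ¬ p ≤ y).sup e
  have hS : ∀ x y, f x ≤ S x y ⊔ f y := fun x y =>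
    f.apply_le_sup_apply_of_kernel_le hpstar he.1 fun p hp hx hy =>
      Finset.le_sup (by simp [hp, hx, hy])
  refine ⟨S x y, S y x, hS x y, sup_comm (f x) (S y x) ▸ hS y x, ?_⟩
  rw [Finset.sup_inf_sup, Finset.sup_eq_bot_iff]
  rintro ⟨p, q⟩ hpq
  simp only [mem_product, mem_filter, mem_univ, true_and] at hpq
  obtain ⟨⟨hp, hpx, hpy⟩, hq, hqy, hqx⟩ := hpq
  exact he.2 p q hp hq (fun h => hpy (h.trans hqy)) (fun h => hqx (h.trans hpx))

end KernelToConsonance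

section ConsonanceToKernel

variable [Fintype D]

open Classical in
/-- For consonance witnesses `u p q`, `v p q` of the pairs `(f p, f q)`, this is
`f p ⊓ ⨅_{q ∥ p} (u p q ⊓ v q p)`: the comparable `q`, such as `q = p`, contribute `f p`. -/
noncomputable def witnessKernel [Preorder D] [SemilatticeInf L] (f : D → L) (u v : D → D → L)
    (p : D) : L :=
  univ.inf' (univ_nonempty_iff.2 ⟨p⟩) fun q => if ¬ p ≤ q ∧ ¬ q ≤ p then u p q ⊓ v q p else f p

section Preorder

variable [Preorder D] [SemilatticeInf L] {f : D → L} {u v : D → D → L} {p q : D}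

theorem witnessKernel_le_apply : witnessKernel f u v p ≤ f p :=
  (inf'_le _ (mem_univ p)).trans (by simp)

theorem witnessKernel_le_of_incomparable (hpq : ¬ p ≤ q) (hqp : ¬ q ≤ p) :
    witnessKernel f u v p ≤ u p q ⊓ v q p :=
  (inf'_le _ (mem_univ q)).trans (by simp [hpq, hqp])

theorem witnessKernel_inf_eq_bot [OrderBot L] (huv : ∀ p q, u p q ⊓ v p q = ⊥) (hpq : ¬ p ≤ q)
    (hqp : ¬ q ≤ p) : witnessKernel f u v p ⊓ witnessKernel f u v q = ⊥ :=
  le_bot_iff.1 <| (inf_le_inf (witnessKernel_le_of_incomparable hpq hqp)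
    (witnessKernel_le_of_incomparable hqp hpq)).trans
    (inf_le_inf inf_le_left inf_le_right) |>.trans (huv p q).le

end Preorder

variable [Lattice D] [DistribLattice L]

theorem LatticeHom.apply_eq_sup_witnessKernel (f : LatticeHom D L) {u v : D → D → L} {p pstar : D}
    (hpstar : IsGreatest {x | x < p} pstar) (hu : ∀ p q, f p ≤ u p q ⊔ f q)
    (hv : ∀ p q, f q ≤ f p ⊔ v p q) : f p = f pstar ⊔ witnessKernel f u v p := by
  refine le_antisymm ?_ (sup_le (OrderHomClass.mono f hpstar.1.le) witnessKernel_le_apply)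
  rw [witnessKernel, inf'_sup_distrib_left]
  refine le_inf' _ _ fun q _ => ?_
  split_ifs with hpq
  · have hmeet : f p ⊓ f q ≤ f pstar := by
      rw [← map_inf]
      exact OrderHomClass.mono f <| hpstar.2 <|
        inf_le_left.lt_of_ne fun h => hpq.1 (h ▸ inf_le_right)
    rw [sup_inf_left]
    exact le_inf (le_sup_of_le_sup_of_inf_le (sup_comm (u p q) _ ▸ hu p q) hmeet)
      (le_sup_of_le_sup_of_inf_le (hv q p) hmeet)
  · exact le_sup_right

theorem exists_isConsonanceKernel_of_consonant [OrderBot L] (f : LatticeHom D L)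
    {pstar : D → D} (hpstar : ∀ p, SupIrred p → IsGreatest {x | x < p} (pstar p))
    (hf : ∀ x y, Consonant (f x) (f y)) : ∃ e, IsConsonanceKernel f pstar e := by
  choose u v hu hv huv using hf
  exact ⟨witnessKernel f u v, fun p hp => f.apply_eq_sup_witnessKernel (hpstar p hp) hu hv,
    fun p q _ _ hpq hqp => witnessKernel_inf_eq_bot huv hpq hqp⟩

end ConsonanceToKernel

end

theorem stmt9_general {D L : Type*} [DistribLattice D] [Fintype D]
    [DistribLattice L] [OrderBot L]
    (f : D → L)
    (hf : ∀ x y : D, f (x ⊔ y) = f x ⊔ f y ∧ f (x ⊓ y) = f x ⊓ f y)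
    (pstar : D → D) (hpstar : ∀ p : D, SupIrred p → IsGreatest {x : D | x < p} (pstar p)) :
    (∃ e : D → L, (∀ p : D, SupIrred p → f p = f (pstar p) ⊔ e p) ∧
        (∀ p q : D, SupIrred p → SupIrred q → ¬ p ≤ q → ¬ q ≤ p → e p ⊓ e q = ⊥)) ↔
      (∀ a ∈ Set.range f, ∀ b ∈ Set.range f,
        ∃ u v : L, a ≤ u ⊔ b ∧ b ≤ a ⊔ v ∧ u ⊓ v = ⊥) := by
  let φ : LatticeHom D L :=
    { toFun := f, map_sup' := fun x y => (hf x y).1, map_inf' := fun x y => (hf x y).2 }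
  have hlt : ∀ p, SupIrred p → pstar p < p := fun p hp => (hpstar p hp).1
  change (∃ e, IsConsonanceKernel φ pstar e) ↔
    ∀ a ∈ Set.range φ, ∀ b ∈ Set.range φ, Consonant a b
  simp only [Set.forall_mem_range]
  exact ⟨fun ⟨_, he⟩ => he.consonant φ.toSupHom hlt,
    exists_isConsonanceKernel_of_consonant φ hpstar⟩

/-- a lattice homomorphism `f : D → L` from a finite distributive lattice `D`
to a distributive lattice `L` with least element `⊥` has a consonance kernel iff the range
of `f` is consonant in `L`.  Here `pstar p` denotes the unique lower cover `p_*` of a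
join-irreducible `p`, characterized as the greatest element strictly below `p`. -/
theorem stmt9 {D L : Type*} [DistribLattice D] [OrderBot D] [Fintype D]
    [DistribLattice L] [OrderBot L]
    (f : D → L)
    (hf : ∀ x y : D, f (x ⊔ y) = f x ⊔ f y ∧ f (x ⊓ y) = f x ⊓ f y)
    (pstar : D → D) (hpstar : ∀ p : D, SupIrred p → IsGreatest {x : D | x < p} (pstar p)) :
    (∃ e : D → L, (∀ p : D, SupIrred p → f p = f (pstar p) ⊔ e p) ∧
        (∀ p q : D, SupIrred p → SupIrred q → ¬ p ≤ q → ¬ q ≤ p → e p ⊓ e q = ⊥)) ↔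
      (∀ a ∈ Set.range f, ∀ b ∈ Set.range f,
        ∃ u v : L, a ≤ u ⊔ b ∧ b ≤ a ⊔ v ∧ u ⊓ v = ⊥) :=
  stmt9_general f hf pstar hpstar
end

section
/- Let D be a finite semi-Heyting sublattice of a bounded distributive lattice E, let f : D → L be a 0-lattice homomorphism into a distributive 0-lattice L, and let a, b ∈ E with a ∧ b = 0. Then any join-irreducible elements p, q of D satisfying p ≤ p_* ∨ a and q ≤ q_* ∨ b are incomparable. In particular, for any consonance kernel e⃗ of f, setting f_{e⃗}(c) := ⋁{e_p : p ∈ Ji(D), p ≤ p_* ∨ c}, one has f_{e⃗}(a) ∧ f_{e⃗}(b) = 0. -/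
/-- The set of join-irreducible elements of a sublattice `S` (viewed as a subset). -/
def JiSet {E : Type*} [Lattice E] [OrderBot E] (S : Set E) : Set E :=
  {p | p ∈ S ∧ p ≠ ⊥ ∧ ∀ x ∈ S, ∀ y ∈ S, p = x ⊔ y → p = x ∨ p = y}

/-!
Let `z = p →_E p_*`, which lies in `D` because `D` is semi-Heyting. From `p ≤ p_* ⊔ a` and
`a ⊓ b = ⊥` we get `p ⊓ b ≤ p_*`, i.e. `b ≤ z`. Hence `q ≤ q_* ⊔ b ≤ q_* ⊔ z`, and since `q` is
join-irreducible in `D` and `q ⊓ z ∈ D`, distributivity gives `q ≤ z`. So `p ≤ q` would give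
`p = p ⊓ z ≤ p_*`, which is absurd; by symmetry `q ≰ p` as well. The kernel elements indexing
`f_e(a)` and `f_e(b)` are therefore pairwise disjoint, and in a distributive lattice the joins of
two finite families with pairwise disjoint members are disjoint.
-/

theorem IsLUB.disjoint_left_of_finite {L : Type*} [DistribLattice L] [OrderBot L]
    {S : Set L} {u c : L} (h : IsLUB S u) (hS : S.Finite) (hc : ∀ y ∈ S, Disjoint y c) :
    Disjoint u c := by
  obtain rfl : hS.toFinset.sup id = u := by
    simpa using (Finset.isLUB_sup_id (s := hS.toFinset)).unique (by simpa using h)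
  exact Finset.disjoint_sup_left.2 fun y hy => hc y (hS.mem_toFinset.1 hy)

theorem le_of_isGreatest_inf_le_of_le_sup {E : Type*} [DistribLattice E] [OrderBot E]
    {p p' a b z : E} (hz : IsGreatest {w | p ⊓ w ≤ p'} z) (hpa : p ≤ p' ⊔ a)
    (hab : Disjoint a b) : b ≤ z :=
  hz.2 <| Disjoint.left_le_of_le_sup_right (inf_le_left.trans hpa) (hab.symm.mono_left inf_le_right)

section JiSet

variable {E : Type*} [DistribLattice E] [OrderBot E] {D : Set E}

theorem JiSet.le_of_le_sup_of_lt {p x y : E} (hp : p ∈ JiSet D) (hx : x ∈ D) (hxp : x < p)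
    (hpy : p ⊓ y ∈ D) (h : p ≤ x ⊔ y) : p ≤ y := by
  have hsplit : p = x ⊔ p ⊓ y := by
    apply le_antisymm
    · calc p ≤ p ⊓ (x ⊔ y) := le_inf le_rfl h
        _ = x ⊔ p ⊓ y := by rw [inf_sup_left, inf_eq_right.2 hxp.le]
    · exact sup_le hxp.le inf_le_left
  rcases hp.2.2 x hx _ hpy hsplit with h | h
  · exact absurd h.symm hxp.ne
  · exact h.le.trans inf_le_right

theorem JiSet.not_le_of_le_sup_of_disjoint (hDinf : ∀ x ∈ D, ∀ y ∈ D, x ⊓ y ∈ D)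
    (hSH : ∀ x ∈ D, ∀ y ∈ D, ∃ z ∈ D, IsGreatest {w : E | x ⊓ w ≤ y} z)
    {p q p' q' a b : E} (hp : p ∈ JiSet D) (hq : q ∈ JiSet D)
    (hp' : p' ∈ D) (hp'p : p' < p) (hq' : q' ∈ D) (hq'q : q' < q)
    (hpa : p ≤ p' ⊔ a) (hqb : q ≤ q' ⊔ b) (hab : Disjoint a b) : ¬ p ≤ q := by
  intro hpq
  obtain ⟨z, hzD, hz⟩ := hSH p hp.1 p' hp'
  have hbz : b ≤ z := le_of_isGreatest_inf_le_of_le_sup hz hpa hab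
  have hqz : q ≤ z :=
    JiSet.le_of_le_sup_of_lt hq hq' hq'q (hDinf q hq.1 z hzD) (hqb.trans (sup_le_sup_left hbz _))
  refine hp'p.not_ge ?_
  calc p = p ⊓ z := (inf_eq_left.2 (hpq.trans hqz)).symm
    _ ≤ p' := hz.1

end JiSet

theorem stmt10_general {E L : Type*} [DistribLattice E] [BoundedOrder E]
    [DistribLattice L] [OrderBot L]
    (D : Set E) (hDfin : D.Finite) (hDinf : ∀ x ∈ D, ∀ y ∈ D, x ⊓ y ∈ D)
    (hSH : ∀ x ∈ D, ∀ y ∈ D, ∃ z ∈ D, IsGreatest {w : E | x ⊓ w ≤ y} z)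
    (f : E → L)
    (a b : E) (hab : a ⊓ b = ⊥)
    (pstar : E → E)
    (hpstar : ∀ p ∈ JiSet D, IsGreatest {w : E | w ∈ D ∧ w < p} (pstar p)) :
    (∀ p ∈ JiSet D, ∀ q ∈ JiSet D,
      p ≤ pstar p ⊔ a → q ≤ pstar q ⊔ b → ¬ p ≤ q ∧ ¬ q ≤ p) ∧
    (∀ e : E → L,
      (∀ p ∈ JiSet D, f p = f (pstar p) ⊔ e p) →
      (∀ p ∈ JiSet D, ∀ q ∈ JiSet D, ¬ p ≤ q → ¬ q ≤ p → e p ⊓ e q = ⊥) →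
      ∀ α β : L,
        IsLUB {x : L | ∃ p ∈ JiSet D, p ≤ pstar p ⊔ a ∧ x = e p} α →
        IsLUB {x : L | ∃ p ∈ JiSet D, p ≤ pstar p ⊔ b ∧ x = e p} β →
        α ⊓ β = ⊥) := by
  have incomp : ∀ p ∈ JiSet D, ∀ q ∈ JiSet D,
      p ≤ pstar p ⊔ a → q ≤ pstar q ⊔ b → ¬ p ≤ q ∧ ¬ q ≤ p := by
    intro p hp q hq hpa hqb
    obtain ⟨⟨hp', hp'p⟩, -⟩ := hpstar p hp
    obtain ⟨⟨hq', hq'q⟩, -⟩ := hpstar q hq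
    exact ⟨JiSet.not_le_of_le_sup_of_disjoint hDinf hSH hp hq hp' hp'p hq' hq'q hpa hqb
        (disjoint_iff.2 hab),
      JiSet.not_le_of_le_sup_of_disjoint hDinf hSH hq hp hq' hq'q hp' hp'p hqb hpa
        (disjoint_iff.2 hab).symm⟩
  refine ⟨incomp, fun e _ hker α β hα hβ => disjoint_iff.1 ?_⟩
  have hfin : ∀ c, {x : L | ∃ p ∈ JiSet D, p ≤ pstar p ⊔ c ∧ x = e p}.Finite := fun c =>
    (hDfin.image e).subset (by rintro _ ⟨p, hp, -, rfl⟩; exact ⟨p, hp.1, rfl⟩)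
  refine hα.disjoint_left_of_finite (hfin a) fun x hx =>
    (hβ.disjoint_left_of_finite (hfin b) fun y hy => ?_).symm
  obtain ⟨p, hp, hpa, rfl⟩ := hx
  obtain ⟨q, hq, hqb, rfl⟩ := hy
  obtain ⟨hpq, hqp⟩ := incomp p hp q hq hpa hqb
  exact disjoint_iff.2 (hker q hq p hp hqp hpq)

/-- let `D` be a finite semi-Heyting `0,1`-sublattice of a bounded
distributive lattice `E` (i.e. for `x, y ∈ D` the Heyting implication `x →_E y` exists
and lies in `D`), let `f : D → L` be a `0`-lattice homomorphism (given as a map on `E`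
whose restriction to `D` is a `0`-lattice homomorphism), and let `a, b ∈ E` with
`a ⊓ b = ⊥`.  Then any join-irreducible `p, q` of `D` with `p ≤ p_* ⊔ a` and
`q ≤ q_* ⊔ b` are incomparable; in particular for any consonance kernel `e` of `f↾D`,
`f_e(a) ⊓ f_e(b) = ⊥`, where `f_e(c) = ⋁ {e p : p ∈ Ji(D), p ≤ p_* ⊔ c}` is expressed
as a least upper bound.  Here `pstar p` is the unique lower cover `p_*` of `p` in `D`. -/
theorem stmt10 {E L : Type*} [DistribLattice E] [BoundedOrder E]
    [DistribLattice L] [OrderBot L]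
    (D : Set E) (hDfin : D.Finite) (hDbot : ⊥ ∈ D) (hDtop : ⊤ ∈ D)
    (hDsup : ∀ x ∈ D, ∀ y ∈ D, x ⊔ y ∈ D) (hDinf : ∀ x ∈ D, ∀ y ∈ D, x ⊓ y ∈ D)
    (hSH : ∀ x ∈ D, ∀ y ∈ D, ∃ z ∈ D, IsGreatest {w : E | x ⊓ w ≤ y} z)
    (f : E → L)
    (hfD : ∀ x ∈ D, ∀ y ∈ D, f (x ⊔ y) = f x ⊔ f y ∧ f (x ⊓ y) = f x ⊓ f y)
    (hf0 : f ⊥ = ⊥)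
    (a b : E) (hab : a ⊓ b = ⊥)
    (pstar : E → E)
    (hpstar : ∀ p ∈ JiSet D, IsGreatest {w : E | w ∈ D ∧ w < p} (pstar p)) :
    (∀ p ∈ JiSet D, ∀ q ∈ JiSet D,
      p ≤ pstar p ⊔ a → q ≤ pstar q ⊔ b → ¬ p ≤ q ∧ ¬ q ≤ p) ∧
    (∀ e : E → L,
      (∀ p ∈ JiSet D, f p = f (pstar p) ⊔ e p) →
      (∀ p ∈ JiSet D, ∀ q ∈ JiSet D, ¬ p ≤ q → ¬ q ≤ p → e p ⊓ e q = ⊥) →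
      ∀ α β : L,
        IsLUB {x : L | ∃ p ∈ JiSet D, p ≤ pstar p ⊔ a ∧ x = e p} α →
        IsLUB {x : L | ∃ p ∈ JiSet D, p ≤ pstar p ⊔ b ∧ x = e p} β →
        α ⊓ β = ⊥) :=
  stmt10_general D hDfin hDinf hSH f a b hab pstar hpstar
end

section
/- Let k be a totally ordered division ring, let Ω be a convex subset of a right k-vector space E, and let F ∪ {a} be a set of affine functionals on E. Set A⁺ := {x ∈ Ω : a(x) > 0} and A⁻ := {x ∈ Ω : a(x) < 0}. Then for every U ∈ Bool(F, Ω), if U ⊆ A⁺ ∪ A⁻, there exist U⁺, U⁻ ∈ Bool(F, Ω) such that U = U⁺ ∪ U⁻, U⁺ ⊆ A⁺, and U⁻ ⊆ A⁻. -/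
/-!
Every member of `Bool(F, Ω)` is a finite union of convex members of `Bool(F, Ω)`, and so is its
complement in `Ω`. For the generators this is because affine functionals preserve convex
combinations (the complement of `⟦f > 0⟧` is `⟦f < 0⟧ ∪ ⟦f = 0⟧`), and the property of a set
together with its complement survives the Boolean operations, since convex sets are closed under
intersection. On a convex set where `a` does not vanish, `a` has constant sign: otherwise it would
vanish at a suitable convex combination of a point where it is positive and one where it is
negative. So the convex pieces of `U` split into those on which `a > 0` and those on which `a < 0`.
-/

/-- An affine functional on a right `k`-vector space `E`: a map `f : E → k` such that
`f - f 0` is a linear functional (additive, and `(f - f 0)(x · c) = (f - f 0)(x) * c`). -/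
def IsAffineFunctional (k : Type*) [DivisionRing k] (E : Type*) [AddCommGroup E]
    [Module kᵐᵒᵖ E] (f : E → k) : Prop :=
  (∀ x y : E, f (x + y) - f 0 = (f x - f 0) + (f y - f 0)) ∧
  (∀ (c : k) (x : E), f (MulOpposite.op c • x) - f 0 = (f x - f 0) * c)

/-- A convex subset of a right `k`-vector space. -/
def IsConvexSet (k : Type*) [DivisionRing k] [LinearOrder k] (E : Type*) [AddCommGroup E]
    [Module kᵐᵒᵖ E] (Ω : Set E) : Prop :=
  ∀ x ∈ Ω, ∀ y ∈ Ω, ∀ lam mu : k, 0 ≤ lam → 0 ≤ mu → lam + mu = 1 →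
    MulOpposite.op lam • x + MulOpposite.op mu • y ∈ Ω

/-- Membership in `Bool(F, Ω)`: the Boolean subalgebra of the powerset of `Ω` generated
by the sets `⟦f > 0⟧ = {x ∈ Ω : f x > 0}` and `⟦f < 0⟧` for `f ∈ F`. -/
inductive MemBoolF {k E : Type*} [DivisionRing k] [LinearOrder k]
    (F : Set (E → k)) (Ω : Set E) : Set E → Prop
  | pos (f : E → k) (hf : f ∈ F) : MemBoolF F Ω {x ∈ Ω | 0 < f x}
  | neg (f : E → k) (hf : f ∈ F) : MemBoolF F Ω {x ∈ Ω | f x < 0}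
  | empty : MemBoolF F Ω ∅
  | full : MemBoolF F Ω Ω
  | union {U V : Set E} : MemBoolF F Ω U → MemBoolF F Ω V → MemBoolF F Ω (U ∪ V)
  | inter {U V : Set E} : MemBoolF F Ω U → MemBoolF F Ω V → MemBoolF F Ω (U ∩ V)
  | sdiff {U V : Set E} : MemBoolF F Ω U → MemBoolF F Ω V → MemBoolF F Ω (U \ V)

lemma IsStrictOrderedRing.of_addLeftStrictMono_of_posMulStrictMono (k : Type*) [Ring k]
    [LinearOrder k] [AddLeftStrictMono k] [PosMulStrictMono k] [Nontrivial k] :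
    IsStrictOrderedRing k :=
  have := addLeftMono_of_addLeftStrictMono k
  have : IsOrderedAddMonoid k := { add_le_add_left := fun _ _ h c => add_le_add_left h c }
  have : ZeroLEOneClass k := ⟨le_of_not_gt fun h =>
    lt_asymm h <| by
      simpa only [neg_mul, one_mul, neg_neg] using mul_pos (neg_pos.2 h) (neg_pos.2 h)⟩
  .of_mul_pos fun _ _ => mul_pos

section

variable {k : Type*} [DivisionRing k] {E : Type*} [AddCommGroup E] [Module kᵐᵒᵖ E]

lemma IsAffineFunctional.map_convexComb {f : E → k} (hf : IsAffineFunctional k E f) (x y : E)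
    {lam mu : k} (hsum : lam + mu = 1) :
    f (MulOpposite.op lam • x + MulOpposite.op mu • y) = f x * lam + f y * mu := by
  have h0 : f x * lam + f y * mu - f 0 = f x * lam + f y * mu - (f 0 * lam + f 0 * mu) := by
    rw [← mul_add, hsum, mul_one]
  have key := hf.1 (MulOpposite.op lam • x) (MulOpposite.op mu • y)
  rw [hf.2 lam x, hf.2 mu y, sub_mul, sub_mul] at key
  rw [← sub_left_inj, key, h0]
  abel

variable [LinearOrder k] {Ω C D : Set E} {f a : E → k}

lemma IsConvexSet.inter (hC : IsConvexSet k E C) (hD : IsConvexSet k E D) :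
    IsConvexSet k E (C ∩ D) :=
  fun _ hx _ hy lam mu hlam hmu hsum =>
    ⟨hC _ hx.1 _ hy.1 lam mu hlam hmu hsum, hD _ hx.2 _ hy.2 lam mu hlam hmu hsum⟩

lemma IsConvexSet.sep_affine (hΩ : IsConvexSet k E Ω) (hf : IsAffineFunctional k E f) {P : k → Prop}
    (hP : ∀ p q lam mu : k, P p → P q → 0 ≤ lam → 0 ≤ mu → lam + mu = 1 → P (p * lam + q * mu)) :
    IsConvexSet k E {x ∈ Ω | P (f x)} := by
  rintro x ⟨hxΩ, hx⟩ y ⟨hyΩ, hy⟩ lam mu hlam hmu hsum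
  refine ⟨hΩ x hxΩ y hyΩ lam mu hlam hmu hsum, ?_⟩
  rw [hf.map_convexComb x y hsum]
  exact hP _ _ _ _ hx hy hlam hmu hsum

lemma IsConvexSet.sep_eq_zero (hΩ : IsConvexSet k E Ω) (hf : IsAffineFunctional k E f) :
    IsConvexSet k E {x ∈ Ω | f x = 0} :=
  hΩ.sep_affine hf (P := (· = 0)) fun p q _ _ hp hq _ _ _ => by
    rw [hp, hq, zero_mul, zero_mul, add_zero]

variable [IsStrictOrderedRing k]

lemma convexComb_pos {p q lam mu : k} (hp : 0 < p) (hq : 0 < q) (hlam : 0 ≤ lam) (hmu : 0 ≤ mu)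
    (hsum : lam + mu = 1) : 0 < p * lam + q * mu := by
  rcases hlam.eq_or_lt with rfl | hlam
  · rw [zero_add] at hsum
    simpa [hsum] using hq
  · exact add_pos_of_pos_of_nonneg (mul_pos hp hlam) (mul_nonneg hq.le hmu)

lemma convexComb_neg {p q lam mu : k} (hp : p < 0) (hq : q < 0) (hlam : 0 ≤ lam) (hmu : 0 ≤ mu)
    (hsum : lam + mu = 1) : p * lam + q * mu < 0 := by
  have := convexComb_pos (neg_pos.2 hp) (neg_pos.2 hq) hlam hmu hsum
  rwa [neg_mul, neg_mul, ← neg_add, neg_pos] at this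

namespace IsConvexSet

lemma sep_pos (hΩ : IsConvexSet k E Ω) (hf : IsAffineFunctional k E f) :
    IsConvexSet k E {x ∈ Ω | 0 < f x} :=
  hΩ.sep_affine hf fun _ _ _ _ => convexComb_pos

lemma sep_neg (hΩ : IsConvexSet k E Ω) (hf : IsAffineFunctional k E f) :
    IsConvexSet k E {x ∈ Ω | f x < 0} :=
  hΩ.sep_affine hf (P := (· < 0)) fun _ _ _ _ => convexComb_neg

lemma exists_eq_zero_of_pos_of_neg (hC : IsConvexSet k E C) (ha : IsAffineFunctional k E a)
    {x y : E} (hx : x ∈ C) (hy : y ∈ C) (hax : 0 < a x) (hay : a y < 0) :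
    ∃ z ∈ C, a z = 0 := by
  obtain ⟨c, hc, hacx⟩ : ∃ c, 0 < c ∧ a x = c + a y :=
    ⟨a x - a y, sub_pos.2 (hay.trans hax), (sub_add_cancel _ _).symm⟩
  have hsum : c⁻¹ * -a y + c⁻¹ * a x = 1 := by
    rw [← mul_add, hacx, neg_add_cancel_comm_assoc, inv_mul_cancel₀ hc.ne']
  refine ⟨_, hC x hx y hy _ _ (mul_nonneg (inv_nonneg.2 hc.le) (neg_nonneg.2 hay.le))
    (mul_nonneg (inv_nonneg.2 hc.le) hax.le) hsum, ?_⟩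
  -- `k` need not be commutative: the two cross terms `a x c⁻¹ a y` and `a y c⁻¹ a x` agree
  -- only because `a x = c + a y`.
  rw [ha.map_convexComb x y hsum, hacx, add_mul, mul_add, ← mul_assoc c, mul_inv_cancel₀ hc.ne',
    one_mul, mul_add, ← mul_assoc (a y) c⁻¹ c, mul_assoc (a y), inv_mul_cancel₀ hc.ne', mul_one]
  noncomm_ring

lemma pos_or_neg_of_ne_zero (hC : IsConvexSet k E C) (ha : IsAffineFunctional k E a)
    (h : ∀ z ∈ C, a z ≠ 0) : (∀ z ∈ C, 0 < a z) ∨ ∀ z ∈ C, a z < 0 := by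
  by_contra! ⟨⟨y, hy, hay⟩, x, hx, hax⟩
  obtain ⟨z, hz, haz⟩ := hC.exists_eq_zero_of_pos_of_neg ha hx hy
    (hax.lt_of_ne' (h x hx)) (hay.lt_of_ne (h y hy))
  exact h z hz haz

end IsConvexSet

end

section

variable {k : Type*} [DivisionRing k] [LinearOrder k] {E : Type*} {F : Set (E → k)}
  {Ω U V C : Set E}

lemma MemBoolF.subset (hU : MemBoolF F Ω U) : U ⊆ Ω := by
  induction hU with
  | pos | neg => exact Set.sep_subset _ _
  | empty => exact Set.empty_subset _
  | full => exact subset_rfl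
  | union _ _ hU hV => exact Set.union_subset hU hV
  | inter _ _ hU _ => exact Set.inter_subset_left.trans hU
  | sdiff _ _ hU _ => exact Set.sdiff_subset.trans hU

lemma MemBoolF.sUnion {S : Set (Set E)} (hS : S.Finite) (h : ∀ C ∈ S, MemBoolF F Ω C) :
    MemBoolF F Ω (⋃₀ S) := by
  induction S, hS using Set.Finite.induction_on with
  | empty => simpa using MemBoolF.empty
  | insert _ _ ih =>
    rw [Set.sUnion_insert]
    exact .union (h _ (Set.mem_insert _ _)) (ih fun C hC => h C (Set.mem_insert_of_mem _ hC))

lemma MemBoolF.sep_eq_zero {f : E → k} (hf : f ∈ F) : MemBoolF F Ω {x ∈ Ω | f x = 0} := by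
  have : {x ∈ Ω | f x = 0} = Ω \ ({x ∈ Ω | 0 < f x} ∪ {x ∈ Ω | f x < 0}) := by
    ext x
    grind
  rw [this]
  exact .sdiff .full (.union (.pos f hf) (.neg f hf))

variable [AddCommGroup E] [Module kᵐᵒᵖ E]

variable (F Ω) in
def IsConvexDecomposable (U : Set E) : Prop :=
  ∃ S : Set (Set E), S.Finite ∧ (∀ C ∈ S, MemBoolF F Ω C ∧ IsConvexSet k E C) ∧ U = ⋃₀ S

namespace IsConvexDecomposable

lemma of_mem (hC : MemBoolF F Ω C) (hconv : IsConvexSet k E C) : IsConvexDecomposable F Ω C :=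
  ⟨{C}, Set.finite_singleton C, by simpa using ⟨hC, hconv⟩, (Set.sUnion_singleton C).symm⟩

lemma empty : IsConvexDecomposable F Ω ∅ :=
  ⟨∅, Set.finite_empty, by simp, Set.sUnion_empty.symm⟩

lemma union (hU : IsConvexDecomposable F Ω U) (hV : IsConvexDecomposable F Ω V) :
    IsConvexDecomposable F Ω (U ∪ V) := by
  obtain ⟨S, hSfin, hS, rfl⟩ := hU
  obtain ⟨T, hTfin, hT, rfl⟩ := hV
  exact ⟨S ∪ T, hSfin.union hTfin, fun C hC => hC.elim (hS C) (hT C), (Set.sUnion_union S T).symm⟩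

lemma inter (hU : IsConvexDecomposable F Ω U) (hV : IsConvexDecomposable F Ω V) :
    IsConvexDecomposable F Ω (U ∩ V) := by
  obtain ⟨S, hSfin, hS, rfl⟩ := hU
  obtain ⟨T, hTfin, hT, rfl⟩ := hV
  refine ⟨Set.image2 (· ∩ ·) S T, hSfin.image2 _ hTfin, ?_, ?_⟩
  · rintro _ ⟨C, hC, D, hD, rfl⟩
    exact ⟨.inter (hS C hC).1 (hT D hD).1, (hS C hC).2.inter (hT D hD).2⟩
  · ext x
    simp only [Set.mem_inter_iff, Set.mem_sUnion, Set.mem_image2]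
    constructor
    · rintro ⟨⟨C, hC, hxC⟩, D, hD, hxD⟩
      exact ⟨C ∩ D, ⟨C, hC, D, hD, rfl⟩, hxC, hxD⟩
    · rintro ⟨_, ⟨C, hC, D, hD, rfl⟩, hxC, hxD⟩
      exact ⟨⟨C, hC, hxC⟩, D, hD, hxD⟩

end IsConvexDecomposable

variable [IsStrictOrderedRing k]

lemma MemBoolF.isConvexDecomposable_and_sdiff (hΩ : IsConvexSet k E Ω)
    (hF : ∀ f ∈ F, IsAffineFunctional k E f) (hU : MemBoolF F Ω U) :
    IsConvexDecomposable F Ω U ∧ IsConvexDecomposable F Ω (Ω \ U) := by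
  have hpos : ∀ f ∈ F, IsConvexDecomposable F Ω {x ∈ Ω | 0 < f x} := fun f hf =>
    .of_mem (.pos f hf) (hΩ.sep_pos (hF f hf))
  have hneg : ∀ f ∈ F, IsConvexDecomposable F Ω {x ∈ Ω | f x < 0} := fun f hf =>
    .of_mem (.neg f hf) (hΩ.sep_neg (hF f hf))
  have hzero : ∀ f ∈ F, IsConvexDecomposable F Ω {x ∈ Ω | f x = 0} := fun f hf =>
    .of_mem (.sep_eq_zero hf) (hΩ.sep_eq_zero (hF f hf))
  have hfull : IsConvexDecomposable F Ω Ω := .of_mem .full hΩ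
  induction hU with
  | pos f hf =>
    have : Ω \ {x ∈ Ω | 0 < f x} = {x ∈ Ω | f x < 0} ∪ {x ∈ Ω | f x = 0} := by
      ext x
      grind
    exact ⟨hpos f hf, this ▸ (hneg f hf).union (hzero f hf)⟩
  | neg f hf =>
    have : Ω \ {x ∈ Ω | f x < 0} = {x ∈ Ω | 0 < f x} ∪ {x ∈ Ω | f x = 0} := by
      ext x
      grind
    exact ⟨hneg f hf, this ▸ (hpos f hf).union (hzero f hf)⟩
  | empty => exact ⟨.empty, by rwa [Set.sdiff_empty]⟩
  | full => exact ⟨hfull, by rw [Set.sdiff_self]; exact .empty⟩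
  | union _ _ hU hV =>
    exact ⟨hU.1.union hV.1, Set.sdiff_inter_sdiff ▸ hU.2.inter hV.2⟩
  | inter _ _ hU hV =>
    exact ⟨hU.1.inter hV.1, Set.sdiff_inter.symm ▸ hU.2.union hV.2⟩
  | sdiff hU' hV' hU hV =>
    refine ⟨?_, Set.sdiff_sdiff_eq_sdiff_union hV'.subset ▸ hU.2.union hV.1⟩
    rw [← Set.inter_eq_self_of_subset_left hU'.subset, Set.inter_sdiff_assoc]
    exact hU.1.inter hV.2

end

theorem stmt11_general (k : Type*) [DivisionRing k] [LinearOrder k]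
    [CovariantClass k k (· + ·) (· < ·)] [PosMulStrictMono k]
    (E : Type*) [AddCommGroup E] [Module kᵐᵒᵖ E]
    (Ω : Set E) (hΩ : IsConvexSet k E Ω)
    (F : Set (E → k)) (hF : ∀ f ∈ F, IsAffineFunctional k E f)
    (a : E → k) (ha : IsAffineFunctional k E a)
    (U : Set E) (hU : MemBoolF F Ω U)
    (hsub : U ⊆ {x ∈ Ω | 0 < a x} ∪ {x ∈ Ω | a x < 0}) :
    ∃ Up Um : Set E, MemBoolF F Ω Up ∧ MemBoolF F Ω Um ∧ U = Up ∪ Um ∧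
      Up ⊆ {x ∈ Ω | 0 < a x} ∧ Um ⊆ {x ∈ Ω | a x < 0} := by
  have := IsStrictOrderedRing.of_addLeftStrictMono_of_posMulStrictMono k
  obtain ⟨S, hSfin, hS, rfl⟩ := (hU.isConvexDecomposable_and_sdiff hΩ hF).1
  have hsign (C : Set E) (hC : C ∈ S) : (∀ z ∈ C, 0 < a z) ∨ ∀ z ∈ C, a z < 0 :=
    (hS C hC).2.pos_or_neg_of_ne_zero ha fun z hz => by
      rcases hsub ⟨C, hC, hz⟩ with ⟨-, h⟩ | ⟨-, h⟩
      exacts [h.ne', h.ne]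
  have hbool (p : Set E → Prop) : MemBoolF F Ω (⋃₀ {C ∈ S | p C}) :=
    .sUnion (hSfin.subset (Set.sep_subset _ _)) fun C hC => (hS C hC.1).1
  refine ⟨⋃₀ {C ∈ S | ∀ z ∈ C, 0 < a z}, ⋃₀ {C ∈ S | ∀ z ∈ C, a z < 0}, hbool _, hbool _,
    ?_, ?_, ?_⟩
  · rw [← Set.sUnion_union, ← Set.sep_or, Set.sep_eq_self_iff_mem_true.2 hsign]
  · rintro z ⟨C, ⟨hC, hpos⟩, hz⟩
    exact ⟨(hS C hC).1.subset hz, hpos z hz⟩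
  · rintro z ⟨C, ⟨hC, hneg⟩, hz⟩
    exact ⟨(hS C hC).1.subset hz, hneg z hz⟩

/-- for a convex set `Ω` in a right `k`-vector space `E` and affine
functionals `F ∪ {a}` on `E`, every `U ∈ Bool(F, Ω)` with `U ⊆ A⁺ ∪ A⁻` splits as
`U = U⁺ ∪ U⁻` with `U⁺, U⁻ ∈ Bool(F, Ω)`, `U⁺ ⊆ A⁺`, `U⁻ ⊆ A⁻`, where
`A⁺ = {x ∈ Ω : a x > 0}` and `A⁻ = {x ∈ Ω : a x < 0}`. -/
theorem stmt11 (k : Type*) [DivisionRing k] [LinearOrder k]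
    [CovariantClass k k (· + ·) (· < ·)] [PosMulStrictMono k] [MulPosStrictMono k]
    (E : Type*) [AddCommGroup E] [Module kᵐᵒᵖ E]
    (Ω : Set E) (hΩ : IsConvexSet k E Ω)
    (F : Set (E → k)) (hF : ∀ f ∈ F, IsAffineFunctional k E f)
    (a : E → k) (ha : IsAffineFunctional k E a)
    (U : Set E) (hU : MemBoolF F Ω U)
    (hsub : U ⊆ {x ∈ Ω | 0 < a x} ∪ {x ∈ Ω | a x < 0}) :
    ∃ Up Um : Set E, MemBoolF F Ω Up ∧ MemBoolF F Ω Um ∧ U = Up ∪ Um ∧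
      Up ⊆ {x ∈ Ω | 0 < a x} ∧ Um ⊆ {x ∈ Ω | a x < 0} :=
  stmt11_general k E Ω hΩ F hF a ha U hU hsub
end

section
/- Let k be a totally ordered division ring and let I ⊆ J be sets. Then: (1) ε_{I,J}(ρ^∨_{J,I}(Z)) = ε_{I,J}(ρ^∧_{J,I}(Z)) = Z for every Z ∈ Bool(k^(I), k^(J)); (2) ε_{I,J}[Bool(k^(I), k^(I))] = Bool(k^(I), k^(J)) ⊆ Bool(k^(J), k^(J)); (3) ρ^∧_{J,I}[Bool(k^(J), k^(J))] = ρ^∨_{J,I}[Bool(k^(J), k^(J))] = Bool(k^(I), k^(I)). -/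
/-!
A set in `Bool(k^(I), k^(J))` is a cylinder over `k^(I)`: membership in it depends only on the
signs of finitely many functionals supported in `I`, hence only on `y↾I`. This gives (1) and (2).

For (3), a set in `Bool(k^(J), k^(J))` is a finite union of sign cells
`{y | cmp (a·y) 0 = σ a for a ∈ F}`, and `ρ^∨` commutes with unions, so it suffices to project one
cell. This is Fourier–Motzkin elimination of the finitely many coordinates outside `I`, one at a
time. Eliminating `x_j` rests on a one-dimensional Helly property of the dense order `k`: finitely
many conditions `cmp t v_i = o_i` are jointly satisfiable as soon as they are pairwise
satisfiable, and pairwise satisfiability is a sign condition on `v_i - v_i'`, again a linear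
functional not involving `x_j`. Finally `ρ^∧ Z` is the complement of `ρ^∨` of the complement of `Z`.
-/

open scoped Classical

/-- The linear functional `x ↦ Σ_i a_i * x_i` on `k^(ι)` associated with `a ∈ k^(ι)`. -/
def pairing {k ι : Type*} [DivisionRing k] (a x : ι →₀ k) : k :=
  a.sum fun i c => c * x i

/-- The vectors of `k^(ι)` supported on a subset `I ⊆ ι` (the copy of `k^(I)`
inside `k^(ι)`). -/
def suppIn {k ι : Type*} [Zero k] (I : Set ι) : Set (ι →₀ k) :=
  {y : ι →₀ k | ∀ i, i ∉ I → y i = 0}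

/-- Membership in `Bool(A, Ω)`: the Boolean subalgebra of the powerset of `Ω` generated
by the sets `⟦a > 0⟧` and `⟦a < 0⟧` for `a ∈ A` (identifying `a` with its linear
functional). -/
inductive MemBool {k ι : Type*} [DivisionRing k] [LinearOrder k]
    (A Ω : Set (ι →₀ k)) : Set (ι →₀ k) → Prop
  | pos (a : ι →₀ k) (ha : a ∈ A) : MemBool A Ω {x ∈ Ω | 0 < pairing a x}
  | neg (a : ι →₀ k) (ha : a ∈ A) : MemBool A Ω {x ∈ Ω | pairing a x < 0}
  | empty : MemBool A Ω ∅
  | full : MemBool A Ω Ω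
  | union {U V : Set (ι →₀ k)} : MemBool A Ω U → MemBool A Ω V → MemBool A Ω (U ∪ V)
  | inter {U V : Set (ι →₀ k)} : MemBool A Ω U → MemBool A Ω V → MemBool A Ω (U ∩ V)
  | sdiff {U V : Set (ι →₀ k)} : MemBool A Ω U → MemBool A Ω V → MemBool A Ω (U \ V)

/-- Restriction `y ↦ y↾I` of a vector to the coordinates in `I`. -/
noncomputable def restrictTo {k ι : Type*} [Zero k] (I : Set ι) (y : ι →₀ k) : ι →₀ k :=
  y.filter (· ∈ I)

/-- The canonical Boolean embedding `ε_{I,J} : P(k^(I)) → P(k^(J))`,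
`X ↦ {y : y↾I ∈ X}`. -/
noncomputable def epsilonMap {k ι : Type*} [Zero k] (I : Set ι) (X : Set (ι →₀ k)) :
    Set (ι →₀ k) :=
  {y : ι →₀ k | restrictTo I y ∈ X}

/-- The right adjoint `ρ^∧_{J,I}(Y) = {x ∈ k^(I) : every y with y↾I = x lies in Y}`. -/
noncomputable def rhoInf {k ι : Type*} [Zero k] (I : Set ι) (Y : Set (ι →₀ k)) :
    Set (ι →₀ k) :=
  {x : ι →₀ k | x ∈ suppIn I ∧ ∀ y : ι →₀ k, restrictTo I y = x → y ∈ Y}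

/-- The left adjoint `ρ^∨_{J,I}(Y) = {y↾I : y ∈ Y}`. -/
noncomputable def rhoSup {k ι : Type*} [Zero k] (I : Set ι) (Y : Set (ι →₀ k)) :
    Set (ι →₀ k) :=
  restrictTo I '' Y

theorem isStrictOrderedRing_of_addLeftStrictMono (k : Type*) [Ring k] [LinearOrder k]
    [Nontrivial k] [AddLeftStrictMono k] [PosMulStrictMono k] : IsStrictOrderedRing k := by
  have := addLeftMono_of_addLeftStrictMono k
  have : IsOrderedAddMonoid k :=
    ⟨fun _ _ h c => add_le_add_left h c, fun _ _ h c => add_le_add_right h c⟩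
  have : ZeroLEOneClass k := ⟨le_of_not_gt fun h => by
    have := mul_pos (neg_pos.2 h) (neg_pos.2 h)
    rw [neg_mul_neg, one_mul] at this
    exact this.asymm h⟩
  exact IsStrictOrderedRing.of_mul_pos fun _ _ => mul_pos

instance denselyOrdered_of_isStrictOrderedRing {k : Type*} [DivisionRing k] [LinearOrder k]
    [IsStrictOrderedRing k] : DenselyOrdered k where
  dense a b h := by
    have h2 : (0 : k) < 2 := two_pos
    refine ⟨(a + b) / 2, ?_, ?_⟩
    · rw [← mul_lt_mul_iff_left₀ h2, div_mul_cancel₀ _ h2.ne', mul_two]; simpa using h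
    · rw [← mul_lt_mul_iff_left₀ h2, div_mul_cancel₀ _ h2.ne', mul_two]; simpa using h

section Helly
variable {α : Type*} [LinearOrder α] [DenselyOrdered α] [NoMaxOrder α] [NoMinOrder α]

def jointCond : Ordering → Ordering → Option Ordering
  | .lt, .lt | .gt, .gt => none
  | .eq, .eq => some .eq
  | .gt, _ | .eq, .lt => some .gt
  | .lt, _ | .eq, .gt => some .lt

theorem exists_cmp_eq_and_cmp_eq_iff (a b : α) (o₁ o₂ : Ordering) :
    (∃ t, cmp t a = o₁ ∧ cmp t b = o₂) ↔ ∀ o ∈ jointCond o₁ o₂, cmp b a = o := by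
  cases o₁ <;> cases o₂ <;>
    simp only [jointCond, Option.mem_def, Option.some.injEq, reduceCtorEq, IsEmpty.forall_iff,
      implies_true, iff_true, forall_eq', exists_eq_left, exists_eq_right, cmp_eq_lt_iff,
      cmp_eq_gt_iff, cmp_eq_eq_iff]
  case lt.lt => exact (exists_lt (min a b)).imp fun _ => lt_min_iff.1
  case gt.gt => exact (exists_gt (max a b)).imp fun _ => max_lt_iff.1
  case eq.eq => exact eq_comm
  case lt.gt =>
    exact ⟨fun ⟨_, h, h'⟩ => h'.trans h, fun h => (exists_between h).imp fun _ => And.symm⟩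
  case gt.lt => exact ⟨fun ⟨_, h, h'⟩ => h.trans h', exists_between⟩

theorem exists_forall_cmp_eq_iff_pairwise [Nonempty α] {β : Type*} (s : Finset β) (v : β → α)
    (o : β → Ordering) :
    (∃ t, ∀ i ∈ s, cmp t (v i) = o i) ↔
      ∀ i ∈ s, ∀ i' ∈ s, ∃ t, cmp t (v i) = o i ∧ cmp t (v i') = o i' := by
  refine ⟨fun ⟨t, ht⟩ i hi i' hi' => ⟨t, ht i hi, ht i' hi'⟩, fun H => ?_⟩
  by_cases hEq : ∃ i₀ ∈ s, o i₀ = .eq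
  · obtain ⟨i₀, hi₀, ho⟩ := hEq
    refine ⟨v i₀, fun i hi => ?_⟩
    obtain ⟨t, ht₀, ht⟩ := H i₀ hi₀ i hi
    rw [ho, cmp_eq_eq_iff] at ht₀
    rwa [← ht₀]
  push Not at hEq
  obtain ⟨t, hlow, hup⟩ := Finset.exists_between' ((s.filter (o · = .gt)).image v)
    ((s.filter (o · = .lt)).image v) (by
      simp only [Finset.mem_image, Finset.mem_filter]
      rintro _ ⟨i, ⟨hi, hgt⟩, rfl⟩ _ ⟨i', ⟨hi', hlt⟩, rfl⟩
      obtain ⟨t, h, h'⟩ := H i hi i' hi'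
      rw [hgt, cmp_eq_gt_iff] at h
      rw [hlt, cmp_eq_lt_iff] at h'
      exact h.trans h')
  refine ⟨t, fun i hi => ?_⟩
  cases ho : o i
  · exact (cmp_eq_lt_iff _ _).2 (hup _ (Finset.mem_image_of_mem _ (by simp [hi, ho])))
  · exact absurd ho (hEq i hi)
  · exact (cmp_eq_gt_iff _ _).2 (hlow _ (Finset.mem_image_of_mem _ (by simp [hi, ho])))

end Helly

section Restriction
variable {k ι : Type*} [Zero k]

theorem suppIn_mono {S S' : Set ι} (h : S ⊆ S') : (suppIn S : Set (ι →₀ k)) ⊆ suppIn S' :=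
  fun _ ha i hi => ha i fun hiS => hi (h hiS)

theorem mem_suppIn_diff_singleton {S : Set ι} {j : ι} {a : ι →₀ k} (ha : a ∈ suppIn S)
    (hj : a j = 0) : a ∈ suppIn (S \ {j}) := by
  intro i hi
  by_cases hij : i = j
  · rwa [hij]
  · exact ha i fun hiS => hi ⟨hiS, hij⟩

theorem restrictTo_apply (I : Set ι) (y : ι →₀ k) (i : ι) :
    restrictTo I y i = if i ∈ I then y i else 0 :=
  Finsupp.filter_apply _ _ _

theorem restrictTo_mem_suppIn (I : Set ι) (y : ι →₀ k) : restrictTo I y ∈ suppIn I := by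
  intro i hi
  rw [restrictTo_apply, if_neg hi]

theorem restrictTo_eq_self {I : Set ι} {x : ι →₀ k} (hx : x ∈ suppIn I) : restrictTo I x = x := by
  ext i
  rw [restrictTo_apply]
  split_ifs with hi
  · rfl
  · exact (hx i hi).symm

theorem rhoInf_epsilonMap {I : Set ι} {U : Set (ι →₀ k)} (hU : U ⊆ suppIn I) :
    rhoInf I (epsilonMap I U) = U := by
  ext x
  refine ⟨fun ⟨hx, h⟩ => ?_, fun hx => ⟨hU hx, fun y hy => ?_⟩⟩
  · simpa only [epsilonMap, Set.mem_ofPred_eq, restrictTo_eq_self hx]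
      using h x (restrictTo_eq_self hx)
  · rwa [epsilonMap, Set.mem_ofPred_eq, hy]

theorem rhoSup_epsilonMap {I : Set ι} {U : Set (ι →₀ k)} (hU : U ⊆ suppIn I) :
    rhoSup I (epsilonMap I U) = U := by
  ext x
  refine ⟨fun ⟨y, hy, hyx⟩ => hyx ▸ hy, fun hx => ⟨x, ?_, restrictTo_eq_self (hU hx)⟩⟩
  rwa [epsilonMap, Set.mem_ofPred_eq, restrictTo_eq_self (hU hx)]

theorem rhoInf_eq_sdiff_rhoSup_compl (I : Set ι) (Z : Set (ι →₀ k)) :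
    rhoInf I Z = suppIn I \ rhoSup I Zᶜ := by
  ext x
  simp only [rhoInf, rhoSup, Set.mem_sdiff, Set.mem_ofPred_eq, Set.mem_image, Set.mem_compl_iff]
  refine and_congr_right fun _ => ⟨fun h ⟨y, hy, hyx⟩ => hy (h y hyx), fun h y hyx => ?_⟩
  by_contra hy
  exact h ⟨y, hy, hyx⟩

end Restriction

section Pairing
variable {k ι : Type*} [DivisionRing k]

theorem pairing_add_right (a x y : ι →₀ k) : pairing a (x + y) = pairing a x + pairing a y := by
  simp only [pairing, Finsupp.add_apply, mul_add, Finsupp.sum_add]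

theorem pairing_single_right (a : ι →₀ k) (j : ι) (t : k) :
    pairing a (Finsupp.single j t) = a j * t := by
  unfold pairing
  rw [Finsupp.sum_eq_single j (fun i _ hij => by rw [Finsupp.single_eq_of_ne hij, mul_zero])
    (fun _ => zero_mul _), Finsupp.single_eq_same]

theorem pairing_add_single (a y : ι →₀ k) (j : ι) (t : k) :
    pairing a (y + Finsupp.single j t) = pairing a y + a j * t := by
  rw [pairing_add_right, pairing_single_right]

theorem pairing_smul_left (μ : k) (a x : ι →₀ k) : pairing (μ • a) x = μ * pairing a x := by
  unfold pairing
  rw [Finsupp.sum_smul_index fun _ => zero_mul _, Finsupp.mul_sum]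
  simp only [mul_assoc]

theorem pairing_sub_left (a b x : ι →₀ k) : pairing (a - b) x = pairing a x - pairing b x :=
  Finsupp.sum_sub_index fun _ _ _ => sub_mul _ _ _

theorem pairing_congr_right {a x y : ι →₀ k} (h : ∀ i ∈ a.support, x i = y i) :
    pairing a x = pairing a y :=
  Finsupp.sum_congr fun i hi => by rw [h i hi]

theorem pairing_restrictTo {I : Set ι} {a : ι →₀ k} (ha : a ∈ suppIn I) (y : ι →₀ k) :
    pairing a (restrictTo I y) = pairing a y := by
  refine pairing_congr_right fun i hi => ?_
  rw [restrictTo_apply, if_pos (not_not.1 fun hiI => Finsupp.mem_support_iff.1 hi (ha i hiI))]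

theorem restrictTo_add_single {I : Set ι} {j : ι} (hj : j ∉ I) (y : ι →₀ k) (t : k) :
    restrictTo I (y + Finsupp.single j t) = restrictTo I y := by
  rw [restrictTo, Finsupp.filter_add, Finsupp.filter_single_of_neg _ hj, add_zero, restrictTo]

theorem mem_suppIn_iff_mem_supported {S : Set ι} {a : ι →₀ k} :
    a ∈ suppIn S ↔ a ∈ Finsupp.supported k k S :=
  (Finsupp.mem_supported' k a).symm

noncomputable def normalizeAt (j : ι) (a : ι →₀ k) : ι →₀ k := -(a j)⁻¹ • a

theorem normalizeAt_apply_self {j : ι} {a : ι →₀ k} (h : a j ≠ 0) : normalizeAt j a j = -1 := by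
  rw [normalizeAt, Finsupp.smul_apply, smul_eq_mul, neg_mul, inv_mul_cancel₀ h]

theorem normalizeAt_mem_suppIn {S : Set ι} (j : ι) {a : ι →₀ k} (ha : a ∈ suppIn S) :
    normalizeAt j a ∈ suppIn S := by
  rw [mem_suppIn_iff_mem_supported] at ha ⊢
  exact Submodule.smul_mem _ _ ha

end Pairing

section BooleanAlgebra
variable {k ι : Type*} [DivisionRing k] [LinearOrder k] {A Ω : Set (ι →₀ k)}

theorem MemBool.subset {Z : Set (ι →₀ k)} (hZ : MemBool A Ω Z) : Z ⊆ Ω := by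
  induction hZ with
  | pos | neg => exact Set.sep_subset _ _
  | empty => exact Set.empty_subset _
  | full => exact subset_rfl
  | union _ _ ih₁ ih₂ => exact Set.union_subset ih₁ ih₂
  | inter _ _ ih₁ _ => exact Set.inter_subset_left.trans ih₁
  | sdiff _ _ ih₁ _ => exact Set.sdiff_subset.trans ih₁

theorem MemBool.mono {A' : Set (ι →₀ k)} (hA : A ⊆ A') {Z : Set (ι →₀ k)}
    (hZ : MemBool A Ω Z) : MemBool A' Ω Z := by
  induction hZ with
  | pos a ha => exact .pos a (hA ha)
  | neg a ha => exact .neg a (hA ha)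
  | empty => exact .empty
  | full => exact .full
  | union _ _ ih₁ ih₂ => exact .union ih₁ ih₂
  | inter _ _ ih₁ ih₂ => exact .inter ih₁ ih₂
  | sdiff _ _ ih₁ ih₂ => exact .sdiff ih₁ ih₂

theorem MemBool.inter_of_subset {Ω' : Set (ι →₀ k)} (hΩ : Ω' ⊆ Ω) {Z : Set (ι →₀ k)}
    (hZ : MemBool A Ω Z) : MemBool A Ω' (Z ∩ Ω') := by
  induction hZ with
  | pos a ha =>
    convert MemBool.pos (Ω := Ω') a ha using 1
    ext x; exact ⟨fun ⟨⟨_, h⟩, hx⟩ => ⟨hx, h⟩, fun ⟨hx, h⟩ => ⟨⟨hΩ hx, h⟩, hx⟩⟩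
  | neg a ha =>
    convert MemBool.neg (Ω := Ω') a ha using 1
    ext x; exact ⟨fun ⟨⟨_, h⟩, hx⟩ => ⟨hx, h⟩, fun ⟨hx, h⟩ => ⟨⟨hΩ hx, h⟩, hx⟩⟩
  | empty => rw [Set.empty_inter]; exact .empty
  | full => rw [Set.inter_eq_right.2 hΩ]; exact .full
  | union _ _ ih₁ ih₂ => rw [Set.union_inter_distrib_right]; exact .union ih₁ ih₂
  | inter _ _ ih₁ ih₂ => rw [Set.inter_inter_distrib_right]; exact .inter ih₁ ih₂
  | sdiff _ _ ih₁ ih₂ => rw [Set.inter_sdiff_distrib_right]; exact .sdiff ih₁ ih₂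

theorem MemBool.biUnion {β : Type*} {𝒞 : Set β} (h𝒞 : 𝒞.Finite) {f : β → Set (ι →₀ k)}
    (hf : ∀ c ∈ 𝒞, MemBool A Ω (f c)) : MemBool A Ω (⋃ c ∈ 𝒞, f c) := by
  induction 𝒞, h𝒞 using Set.Finite.induction_on with
  | empty => rw [Set.biUnion_empty]; exact .empty
  | insert _ _ ih =>
    rw [Set.biUnion_insert]
    exact .union (hf _ (Set.mem_insert _ _)) (ih fun c hc => hf c (Set.mem_insert_of_mem _ hc))

theorem MemBool.sep_cmp_eq {a : ι →₀ k} (ha : a ∈ A) (o : Ordering) :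
    MemBool A Ω {x ∈ Ω | cmp (pairing a x) 0 = o} := by
  cases o
  · simpa only [cmp_eq_lt_iff] using MemBool.neg (Ω := Ω) a ha
  · convert MemBool.sdiff (Ω := Ω) .full (.union (.pos a ha) (.neg a ha)) using 1
    ext x
    simp only [Set.mem_ofPred_eq, Set.mem_sdiff, Set.mem_union, cmp_eq_eq_iff]
    constructor
    · rintro ⟨hx, h⟩
      simp [hx, h]
    · rintro ⟨hx, h⟩
      exact ⟨hx, le_antisymm (not_lt.1 fun h' => h (.inl ⟨hx, h'⟩))
        (not_lt.1 fun h' => h (.inr ⟨hx, h'⟩))⟩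
  · simpa only [cmp_eq_gt_iff] using MemBool.pos (Ω := Ω) a ha

theorem MemBool.exists_finset_signs_determine {Z : Set (ι →₀ k)} (hZ : MemBool A Ω Z) :
    ∃ F : Finset (ι →₀ k), ↑F ⊆ A ∧ ∀ y ∈ Ω, ∀ y' ∈ Ω,
      (∀ a ∈ F, cmp (pairing a y) 0 = cmp (pairing a y') 0) → (y ∈ Z ↔ y' ∈ Z) := by
  induction hZ with
  | pos a ha =>
    refine ⟨{a}, by simpa using ha, fun y hy y' hy' h => ?_⟩
    have := h a (Finset.mem_singleton_self a)
    simp only [Set.mem_ofPred_eq, hy, hy', true_and, ← cmp_eq_gt_iff, this]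
  | neg a ha =>
    refine ⟨{a}, by simpa using ha, fun y hy y' hy' h => ?_⟩
    have := h a (Finset.mem_singleton_self a)
    simp only [Set.mem_ofPred_eq, hy, hy', true_and, ← cmp_eq_lt_iff, this]
  | empty => exact ⟨∅, by simp, fun _ _ _ _ _ => Iff.rfl⟩
  | full => exact ⟨∅, by simp, fun _ hy _ hy' _ => iff_of_true hy hy'⟩
  | union _ _ ih₁ ih₂ | inter _ _ ih₁ ih₂ | sdiff _ _ ih₁ ih₂ =>
    obtain ⟨F₁, hF₁A, hF₁⟩ := ih₁
    obtain ⟨F₂, hF₂A, hF₂⟩ := ih₂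
    refine ⟨F₁ ∪ F₂, by simpa using ⟨hF₁A, hF₂A⟩, fun y hy y' hy' h => ?_⟩
    have h₁ := hF₁ y hy y' hy' fun a ha => h a (Finset.mem_union_left _ ha)
    have h₂ := hF₂ y hy y' hy' fun a ha => h a (Finset.mem_union_right _ ha)
    first
    | exact or_congr h₁ h₂
    | exact and_congr h₁ h₂
    | exact and_congr h₁ (not_congr h₂)

def cellSet (c : Finset ((ι →₀ k) × Ordering)) : Set (ι →₀ k) :=
  {y | ∀ p ∈ c, cmp (pairing p.1 y) 0 = p.2}

theorem MemBool.inter_cellSet {c : Finset ((ι →₀ k) × Ordering)}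
    (hc : ∀ p ∈ c, p.1 ∈ A) : MemBool A Ω (Ω ∩ cellSet c) := by
  induction c using Finset.induction_on with
  | empty => simpa [cellSet] using MemBool.full
  | insert p c _ ih =>
    have hcell : Ω ∩ cellSet (insert p c) =
        {x ∈ Ω | cmp (pairing p.1 x) 0 = p.2} ∩ (Ω ∩ cellSet c) := by
      ext x
      simp only [cellSet, Finset.forall_mem_insert, Set.mem_inter_iff, Set.mem_ofPred_eq]
      tauto
    rw [hcell]
    exact .inter (.sep_cmp_eq (hc p (Finset.mem_insert_self p c)) p.2)
      (ih fun q hq => hc q (Finset.mem_insert_of_mem hq))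

noncomputable def signCell (F : Finset (ι →₀ k)) (y : ι →₀ k) : Finset ((ι →₀ k) × Ordering) :=
  F.image fun a => (a, cmp (pairing a y) 0)

theorem mem_cellSet_signCell {F : Finset (ι →₀ k)} {y y' : ι →₀ k} :
    y' ∈ cellSet (signCell F y) ↔ ∀ a ∈ F, cmp (pairing a y') 0 = cmp (pairing a y) 0 := by
  simp [cellSet, signCell]

theorem MemBool.exists_finite_eq_biUnion_cellSet {Z : Set (ι →₀ k)}
    (hZ : MemBool A Set.univ Z) :
    ∃ 𝒞 : Set (Finset ((ι →₀ k) × Ordering)), 𝒞.Finite ∧ Z = ⋃ c ∈ 𝒞, cellSet c := by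
  obtain ⟨F, -, hF⟩ := hZ.exists_finset_signs_determine
  refine ⟨signCell F '' Z, (F ×ˢ Finset.univ).powerset.finite_toSet.subset ?_, ?_⟩
  · rintro _ ⟨y, -, rfl⟩
    refine Finset.mem_coe.2 (Finset.mem_powerset.2 fun q hq => ?_)
    obtain ⟨a, ha, rfl⟩ := Finset.mem_image.1 hq
    exact Finset.mem_product.2 ⟨ha, Finset.mem_univ _⟩
  · ext y'
    simp only [Set.mem_iUnion, Set.mem_image, exists_prop]
    refine ⟨fun hy' => ⟨_, ⟨y', hy', rfl⟩, mem_cellSet_signCell.2 fun _ _ => rfl⟩, ?_⟩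
    rintro ⟨_, ⟨y, hy, rfl⟩, hy'⟩
    exact (hF y trivial y' trivial fun a ha => (mem_cellSet_signCell.1 hy' a ha).symm).1 hy

end BooleanAlgebra

section Cylinders
variable {k ι : Type*} [DivisionRing k] [LinearOrder k] {I : Set ι}

theorem MemBool.restrictTo_mem_iff {Z : Set (ι →₀ k)} (hZ : MemBool (suppIn I) Set.univ Z)
    (y : ι →₀ k) : restrictTo I y ∈ Z ↔ y ∈ Z := by
  obtain ⟨F, hFA, hF⟩ := hZ.exists_finset_signs_determine
  exact hF _ trivial _ trivial fun a ha => by rw [pairing_restrictTo (hFA ha)]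

theorem epsilonMap_rhoSup {Z : Set (ι →₀ k)} (hZ : MemBool (suppIn I) Set.univ Z) :
    epsilonMap I (rhoSup I Z) = Z := by
  ext y
  refine ⟨fun ⟨z, hz, hzy⟩ => ?_, fun hy => ⟨y, hy, rfl⟩⟩
  rwa [← hZ.restrictTo_mem_iff, ← hzy, hZ.restrictTo_mem_iff]

theorem epsilonMap_rhoInf {Z : Set (ι →₀ k)} (hZ : MemBool (suppIn I) Set.univ Z) :
    epsilonMap I (rhoInf I Z) = Z := by
  ext y
  refine ⟨fun ⟨_, h⟩ => h y rfl, fun hy => ⟨restrictTo_mem_suppIn I y, fun z hz => ?_⟩⟩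
  rwa [← hZ.restrictTo_mem_iff, hz, hZ.restrictTo_mem_iff]

theorem epsilonMap_inter_suppIn {Z : Set (ι →₀ k)} (hZ : MemBool (suppIn I) Set.univ Z) :
    epsilonMap I (Z ∩ suppIn I) = Z := by
  ext y
  exact (and_iff_left (restrictTo_mem_suppIn I y)).trans (hZ.restrictTo_mem_iff y)

theorem memBool_epsilonMap {U : Set (ι →₀ k)} (hU : MemBool (suppIn I) (suppIn I) U) :
    MemBool (suppIn I) Set.univ (epsilonMap I U) := by
  induction hU with
  | pos a ha =>
    convert MemBool.pos (Ω := Set.univ) a ha using 1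
    ext y
    simp [epsilonMap, restrictTo_mem_suppIn, pairing_restrictTo ha]
  | neg a ha =>
    convert MemBool.neg (Ω := Set.univ) a ha using 1
    ext y
    simp [epsilonMap, restrictTo_mem_suppIn, pairing_restrictTo ha]
  | empty => exact .empty
  | full =>
    convert MemBool.full (A := suppIn I) (Ω := Set.univ)
    exact Set.eq_univ_of_forall (restrictTo_mem_suppIn I)
  | union _ _ ih₁ ih₂ => exact .union ih₁ ih₂
  | inter _ _ ih₁ ih₂ => exact .inter ih₁ ih₂
  | sdiff _ _ ih₁ ih₂ => exact .sdiff ih₁ ih₂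

theorem rhoSup_cellSet_of_forall_mem_suppIn {c : Finset ((ι →₀ k) × Ordering)}
    (hc : ∀ p ∈ c, p.1 ∈ suppIn I) : rhoSup I (cellSet c) = suppIn I ∩ cellSet c := by
  ext x
  constructor
  · rintro ⟨y, hy, rfl⟩
    refine ⟨restrictTo_mem_suppIn I y, fun p hp => ?_⟩
    rw [pairing_restrictTo (hc p hp)]
    exact hy p hp
  · rintro ⟨hx, hxc⟩
    exact ⟨x, hxc, restrictTo_eq_self hx⟩

end Cylinders

section FourierMotzkin
variable {k ι : Type*} [DivisionRing k] [LinearOrder k] {I : Set ι}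

def relAt (j : ι) (p : (ι →₀ k) × Ordering) : Ordering :=
  if 0 < p.1 j then p.2 else p.2.swap

-- Keep the conditions free of `x_j`; any two others bound `x_j` by the values of their
-- `normalizeAt` functionals, and are replaced by the condition that these bounds are compatible.
noncomputable def eliminate (j : ι) (c : Finset ((ι →₀ k) × Ordering)) :
    Finset ((ι →₀ k) × Ordering) :=
  c.filter (·.1 j = 0) ∪
    ((c.filter (·.1 j ≠ 0)) ×ˢ (c.filter (·.1 j ≠ 0))).biUnion fun pq =>
      (jointCond (relAt j pq.1) (relAt j pq.2)).toFinset.image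
        fun o => (normalizeAt j pq.2.1 - normalizeAt j pq.1.1, o)

theorem mem_suppIn_of_mem_eliminate {S : Set ι} {j : ι} {c : Finset ((ι →₀ k) × Ordering)}
    (hc : ∀ p ∈ c, p.1 ∈ suppIn S) : ∀ q ∈ eliminate j c, q.1 ∈ suppIn (S \ {j}) := by
  intro q hq
  simp only [eliminate, Finset.mem_union, Finset.mem_filter, Finset.mem_biUnion,
    Finset.mem_image, Finset.mem_product] at hq
  rcases hq with ⟨hq, hqj⟩ | ⟨⟨p, p'⟩, ⟨⟨hp, hpj⟩, hp', hp'j⟩, o, -, rfl⟩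
  · exact mem_suppIn_diff_singleton (hc q hq) hqj
  · refine mem_suppIn_diff_singleton ?_ ?_
    · have h := normalizeAt_mem_suppIn j (hc p hp)
      have h' := normalizeAt_mem_suppIn j (hc p' hp')
      rw [mem_suppIn_iff_mem_supported] at h h' ⊢
      exact Submodule.sub_mem _ h' h
    · rw [Finsupp.sub_apply, normalizeAt_apply_self hpj, normalizeAt_apply_self hp'j, sub_self]

variable [IsStrictOrderedRing k]

theorem cmp_pairing_add_single_eq_iff {j : ι} {p : (ι →₀ k) × Ordering} (hp : p.1 j ≠ 0)
    (y : ι →₀ k) (t : k) :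
    cmp (pairing p.1 (y + Finsupp.single j t)) 0 = p.2 ↔
      cmp t (pairing (normalizeAt j p.1) y) = relAt j p := by
  have hmul : pairing p.1 (y + Finsupp.single j t) =
      p.1 j * (t - pairing (normalizeAt j p.1) y) := by
    rw [pairing_add_single, normalizeAt, pairing_smul_left, mul_sub,
      neg_mul, mul_neg, sub_neg_eq_add, ← mul_assoc, mul_inv_cancel₀ hp, one_mul, add_comm]
  rw [hmul, ← cmp_sub_zero t, relAt]
  conv_lhs => rw [← mul_zero (p.1 j)]
  rcases hp.lt_or_gt with hneg | hpos
  · rw [if_neg hneg.not_gt, cmp_mul_neg_left hneg, ← cmp_swap, Ordering.swap_eq_iff_eq_swap]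
  · rw [if_pos hpos, cmp_mul_pos_left hpos]

theorem exists_add_single_mem_cellSet_iff (j : ι) (c : Finset ((ι →₀ k) × Ordering))
    (y : ι →₀ k) :
    (∃ t, y + Finsupp.single j t ∈ cellSet c) ↔ y ∈ cellSet (eliminate j c) := by
  have hsplit : ∀ t, y + Finsupp.single j t ∈ cellSet c ↔
      (∀ p ∈ c.filter (·.1 j = 0), cmp (pairing p.1 y) 0 = p.2) ∧
        ∀ p ∈ c.filter (·.1 j ≠ 0), cmp t (pairing (normalizeAt j p.1) y) = relAt j p := by
    refine fun t => ⟨fun h => ⟨fun p hp => ?_, fun p hp => ?_⟩, fun ⟨h₀, h₁⟩ p hp => ?_⟩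
    · rw [Finset.mem_filter] at hp
      simpa only [pairing_add_single, hp.2, zero_mul, add_zero] using h p hp.1
    · rw [Finset.mem_filter] at hp
      exact (cmp_pairing_add_single_eq_iff hp.2 y t).1 (h p hp.1)
    · by_cases hpj : p.1 j = 0
      · simpa only [pairing_add_single, hpj, zero_mul, add_zero]
          using h₀ p (Finset.mem_filter.2 ⟨hp, hpj⟩)
      · exact (cmp_pairing_add_single_eq_iff hpj y t).2 (h₁ p (Finset.mem_filter.2 ⟨hp, hpj⟩))
  simp only [hsplit, exists_and_left, exists_forall_cmp_eq_iff_pairwise,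
    exists_cmp_eq_and_cmp_eq_iff]
  simp only [cellSet, eliminate, Set.mem_ofPred_eq, Finset.forall_mem_union]
  refine and_congr_right fun _ => ⟨fun H r hr => ?_, fun H p hp q hq o ho => ?_⟩
  · simp only [Finset.mem_biUnion, Finset.mem_image, Finset.mem_product] at hr
    obtain ⟨⟨p, q⟩, ⟨hp, hq⟩, o, ho, rfl⟩ := hr
    rw [pairing_sub_left, cmp_sub_zero]
    exact H p hp q hq o (Option.mem_toFinset.1 ho)
  · have := H _ (Finset.mem_biUnion.2 ⟨(p, q), Finset.mem_product.2 ⟨hp, hq⟩,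
      Finset.mem_image.2 ⟨o, Option.mem_toFinset.2 ho, rfl⟩⟩)
    rwa [pairing_sub_left, cmp_sub_zero] at this

theorem rhoSup_cellSet_eliminate {j : ι} (hj : j ∉ I) (c : Finset ((ι →₀ k) × Ordering)) :
    rhoSup I (cellSet (eliminate j c)) = rhoSup I (cellSet c) := by
  ext x
  constructor
  · rintro ⟨y, hy, rfl⟩
    obtain ⟨t, ht⟩ := (exists_add_single_mem_cellSet_iff j c y).2 hy
    exact ⟨_, ht, restrictTo_add_single hj y t⟩
  · rintro ⟨y, hy, rfl⟩
    refine ⟨y, (exists_add_single_mem_cellSet_iff j c y).1 ⟨0, ?_⟩, rfl⟩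
    rwa [Finsupp.single_zero, add_zero]

theorem memBool_rhoSup_cellSet (c : Finset ((ι →₀ k) × Ordering)) :
    MemBool (suppIn I) (suppIn I) (rhoSup I (cellSet c)) := by
  suffices H : ∀ (T : Finset ι) (c : Finset ((ι →₀ k) × Ordering)),
      (∀ p ∈ c, p.1 ∈ suppIn (I ∪ T)) → MemBool (suppIn I) (suppIn I) (rhoSup I (cellSet c)) from
    H (c.biUnion fun p => p.1.support) c fun p hp i hi => Finsupp.notMem_support_iff.1 fun h =>
      hi (.inr (Finset.mem_coe.2 (Finset.mem_biUnion.2 ⟨p, hp, h⟩)))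
  intro T
  induction T using Finset.induction_on with
  | empty =>
    intro c hc
    rw [Finset.coe_empty, Set.union_empty] at hc
    rw [rhoSup_cellSet_of_forall_mem_suppIn hc]
    exact .inter_cellSet hc
  | insert j T _ ih =>
    intro c hc
    rw [Finset.coe_insert] at hc
    by_cases hjI : j ∈ I
    · refine ih c fun p hp => suppIn_mono ?_ (hc p hp)
      rintro i (hi | rfl | hi)
      exacts [.inl hi, .inl hjI, .inr hi]
    · rw [← rhoSup_cellSet_eliminate hjI]
      refine ih _ fun q hq => suppIn_mono ?_ (mem_suppIn_of_mem_eliminate hc q hq)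
      rintro i ⟨hi | rfl | hi, hij⟩
      exacts [.inl hi, absurd rfl hij, .inr hi]

theorem memBool_rhoSup {Z : Set (ι →₀ k)} (hZ : MemBool Set.univ Set.univ Z) :
    MemBool (suppIn I) (suppIn I) (rhoSup I Z) := by
  obtain ⟨𝒞, h𝒞, rfl⟩ := hZ.exists_finite_eq_biUnion_cellSet
  rw [rhoSup, Set.image_iUnion₂]
  exact .biUnion h𝒞 fun c _ => memBool_rhoSup_cellSet c

theorem memBool_rhoInf {Z : Set (ι →₀ k)} (hZ : MemBool Set.univ Set.univ Z) :
    MemBool (suppIn I) (suppIn I) (rhoInf I Z) := by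
  rw [rhoInf_eq_sdiff_rhoSup_compl I, Set.compl_eq_univ_sdiff]
  exact .sdiff .full (memBool_rhoSup (.sdiff .full hZ))

end FourierMotzkin

theorem stmt13_general (k ι : Type*) [DivisionRing k] [LinearOrder k]
    [CovariantClass k k (· + ·) (· < ·)] [PosMulStrictMono k]
    (I : Set ι) :
    (∀ Z : Set (ι →₀ k), MemBool (suppIn I) Set.univ Z →
      epsilonMap I (rhoSup I Z) = Z ∧ epsilonMap I (rhoInf I Z) = Z) ∧
    (epsilonMap I '' {U : Set (ι →₀ k) | MemBool (suppIn I) (suppIn I) U} =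
        {U : Set (ι →₀ k) | MemBool (suppIn I) Set.univ U} ∧
      {U : Set (ι →₀ k) | MemBool (suppIn I) Set.univ U} ⊆
        {U : Set (ι →₀ k) | MemBool (Set.univ : Set (ι →₀ k)) Set.univ U}) ∧
    (rhoInf I '' {U : Set (ι →₀ k) | MemBool (Set.univ : Set (ι →₀ k)) Set.univ U} =
        {U : Set (ι →₀ k) | MemBool (suppIn I) (suppIn I) U} ∧
      rhoSup I '' {U : Set (ι →₀ k) | MemBool (Set.univ : Set (ι →₀ k)) Set.univ U} =
        {U : Set (ι →₀ k) | MemBool (suppIn I) (suppIn I) U}) := by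
  have := isStrictOrderedRing_of_addLeftStrictMono k
  have enlarge : ∀ {Z : Set (ι →₀ k)}, MemBool (suppIn I) Set.univ Z →
      MemBool Set.univ Set.univ Z := fun hZ => hZ.mono (Set.subset_univ _)
  refine ⟨fun Z hZ => ⟨epsilonMap_rhoSup hZ, epsilonMap_rhoInf hZ⟩, ⟨?_, fun Z => enlarge⟩, ?_, ?_⟩
  · ext Z
    refine ⟨?_, fun hZ => ⟨Z ∩ suppIn I, hZ.inter_of_subset (Set.subset_univ _),
      epsilonMap_inter_suppIn hZ⟩⟩
    rintro ⟨U, hU, rfl⟩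
    exact memBool_epsilonMap hU
  · ext U
    refine ⟨?_, fun hU => ⟨epsilonMap I U, enlarge (memBool_epsilonMap hU),
      rhoInf_epsilonMap hU.subset⟩⟩
    rintro ⟨Z, hZ, rfl⟩
    exact memBool_rhoInf hZ
  · ext U
    refine ⟨?_, fun hU => ⟨epsilonMap I U, enlarge (memBool_epsilonMap hU),
      rhoSup_epsilonMap hU.subset⟩⟩
    rintro ⟨Z, hZ, rfl⟩
    exact memBool_rhoSup hZ

/-- with `J = ι` and `I ⊆ J`:
(1) `ε(ρ^∨ Z) = ε(ρ^∧ Z) = Z` for `Z ∈ Bool(k^(I), k^(J))`;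
(2) `ε[Bool(k^(I), k^(I))] = Bool(k^(I), k^(J)) ⊆ Bool(k^(J), k^(J))`;
(3) `ρ^∧[Bool(k^(J), k^(J))] = ρ^∨[Bool(k^(J), k^(J))] = Bool(k^(I), k^(I))`. -/
theorem stmt13 (k ι : Type*) [DivisionRing k] [LinearOrder k]
    [CovariantClass k k (· + ·) (· < ·)] [PosMulStrictMono k] [MulPosStrictMono k]
    (I : Set ι) :
    (∀ Z : Set (ι →₀ k), MemBool (suppIn I) Set.univ Z →
      epsilonMap I (rhoSup I Z) = Z ∧ epsilonMap I (rhoInf I Z) = Z) ∧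
    (epsilonMap I '' {U : Set (ι →₀ k) | MemBool (suppIn I) (suppIn I) U} =
        {U : Set (ι →₀ k) | MemBool (suppIn I) Set.univ U} ∧
      {U : Set (ι →₀ k) | MemBool (suppIn I) Set.univ U} ⊆
        {U : Set (ι →₀ k) | MemBool (Set.univ : Set (ι →₀ k)) Set.univ U}) ∧
    (rhoInf I '' {U : Set (ι →₀ k) | MemBool (Set.univ : Set (ι →₀ k)) Set.univ U} =
        {U : Set (ι →₀ k) | MemBool (suppIn I) (suppIn I) U} ∧
      rhoSup I '' {U : Set (ι →₀ k) | MemBool (Set.univ : Set (ι →₀ k)) Set.univ U} =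
        {U : Set (ι →₀ k) | MemBool (suppIn I) (suppIn I) U}) :=
  stmt13_general k ι I
end

section
/- Let k be a totally ordered division ring, let I ⊊ J be sets with J∖I infinite, let L be a distributive 0-lattice, let D be a finite subset of k^(J), and let c ∈ L. Then for every top-faithful 0-lattice homomorphism f : Op(k^(I) ∪ D, k^(J)) → L ∪ {∞}, there exist e ∈ k^(J) and a top-faithful lattice homomorphism g : Op(k^(I) ∪ D ∪ {e}, k^(J)) → L ∪ {∞} extending f such that g(⟦e>0⟧) = c. -/
/-- Membership in `Op⁻(A, k^(ι))`: the sublattice of the powerset of `k^(ι)` generated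
by the sets `⟦a > 0⟧` and `⟦a < 0⟧` for `a ∈ A`. -/
inductive MemOp {k ι : Type*} [DivisionRing k] [LinearOrder k]
    (A : Set (ι →₀ k)) : Set (ι →₀ k) → Prop
  | pos (a : ι →₀ k) (ha : a ∈ A) : MemOp A {x : ι →₀ k | 0 < pairing a x}
  | neg (a : ι →₀ k) (ha : a ∈ A) : MemOp A {x : ι →₀ k | pairing a x < 0}
  | union {U V : Set (ι →₀ k)} : MemOp A U → MemOp A V → MemOp A (U ∪ V)
  | inter {U V : Set (ι →₀ k)} : MemOp A U → MemOp A V → MemOp A (U ∩ V)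

/-- Membership in `Op(A, k^(ι)) = Op⁻(A, k^(ι)) ∪ {k^(ι)}`, a bounded lattice with top
element the full space. -/
def MemOpTop {k ι : Type*} [DivisionRing k] [LinearOrder k]
    (A : Set (ι →₀ k)) (U : Set (ι →₀ k)) : Prop :=
  MemOp A U ∨ U = Set.univ

/-! Choose a coordinate `j ∉ I` on which every vector of `D` vanishes and put `e = single j 1`.
The sets of `Op(k^(I) ∪ D)` do not depend on `x_j`, and a set `U` of `Op(k^(I) ∪ D ∪ {e})`
cuts each hyperplane `x_j = t` in a set `U_t` of `Op(k^(I) ∪ D)`, with `U_0 ⊆ U_t` because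
`⟦e > 0⟧` and `⟦e < 0⟧` miss `x_j = 0`. For some `s > 0`, `g U := (f U_s ⊓ c) ⊔ f U_0` is then
a lattice homomorphism by distributivity and `f U_0 ≤ f U_s`; it extends `f`, it is top-faithful
because `c ≠ ∞`, and `⟦e > 0⟧` has `U_s = k^(J)` and `U_0 = ∅`, so `g ⟦e > 0⟧ = c`. -/

open Set Finsupp

lemma WithTop.sup_eq_top_iff {L : Type*} [SemilatticeSup L] {a b : WithTop L} :
    a ⊔ b = ⊤ ↔ a = ⊤ ∨ b = ⊤ := by
  induction a <;> induction b <;> simp [← WithTop.coe_sup]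

lemma inf_sup_inf_sup_of_le {α : Type*} [DistribLattice α] {a₀ a₁ b₀ b₁ : α} (c : α)
    (ha : a₀ ≤ a₁) (hb : b₀ ≤ b₁) :
    (a₁ ⊓ c ⊔ a₀) ⊓ (b₁ ⊓ c ⊔ b₀) = a₁ ⊓ b₁ ⊓ c ⊔ a₀ ⊓ b₀ := by
  have key {x₀ x₁ : α} (h : x₀ ≤ x₁) : x₁ ⊓ c ⊔ x₀ = x₁ ⊓ (c ⊔ x₀) := by
    rw [sup_comm, ← inf_sup_assoc_of_le c h, sup_comm]
  rw [key ha, key hb, key (inf_le_inf ha hb), inf_inf_inf_comm, ← sup_inf_left]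

lemma exists_pos_of_addLeftStrictMono (k : Type*) [Ring k] [Nontrivial k] [LinearOrder k]
    [CovariantClass k k (· + ·) (· < ·)] : ∃ s : k, 0 < s := by
  rcases lt_or_gt_of_ne (one_ne_zero (α := k)) with h | h
  · exact ⟨-1, Left.neg_pos_iff.mpr h⟩
  · exact ⟨1, h⟩

lemma exists_notMem_forall_apply_eq_zero {k ι : Type*} [Zero k] {I : Set ι} (hI : Iᶜ.Infinite)
    {D : Set (ι →₀ k)} (hD : D.Finite) : ∃ j ∉ I, ∀ d ∈ D, d j = 0 := by
  obtain ⟨j, hjI, hjD⟩ := (hI.sdiff (hD.biUnion fun d _ => d.support.finite_toSet)).nonempty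
  refine ⟨j, hjI, fun d hd => ?_⟩
  by_contra hdj
  exact hjD (mem_biUnion hd (mem_support_iff.mpr hdj))

section OpSlices

variable {k ι : Type*} [DivisionRing k] {A : Set (ι →₀ k)} {U V : Set (ι →₀ k)} {j : ι}

lemma pairing_single (j : ι) (b : k) (x : ι →₀ k) : pairing (single j b) x = b * x j :=
  sum_single_index (zero_mul _)

lemma pairing_update_of_apply_eq_zero {a : ι →₀ k} (ha : a j = 0) (x : ι →₀ k) (t : k) :
    pairing a (x.update j t) = pairing a x := by
  classical
  refine sum_congr fun i hi => ?_
  have hij : i ≠ j := by rintro rfl; exact mem_support_iff.mp hi ha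
  rw [update_apply, if_neg hij]

def slice (j : ι) (t : k) (S : Set (ι →₀ k)) : Set (ι →₀ k) := (fun x => x.update j t) ⁻¹' S

lemma slice_union (t : k) : slice j t (U ∪ V) = slice j t U ∪ slice j t V := rfl

lemma slice_inter (t : k) : slice j t (U ∩ V) = slice j t U ∩ slice j t V := rfl

lemma slice_univ (t : k) : slice j t (Set.univ : Set (ι →₀ k)) = Set.univ := rfl

lemma eq_univ_of_slice_zero_subset (hU : ∀ t, slice j 0 U ⊆ slice j t U)
    (h : slice j 0 U = Set.univ) : U = Set.univ := by
  refine eq_univ_of_forall fun x => ?_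
  have hx := hU (x j) (h ▸ mem_univ x)
  rwa [slice, mem_preimage, update_self] at hx

variable [LinearOrder k]

lemma MemOp.empty (hA : 0 ∈ A) : MemOp A ∅ := by
  simpa [pairing] using MemOp.pos 0 hA

namespace MemOpTop

lemma univ : MemOpTop A Set.univ := Or.inr rfl

lemma union (hU : MemOpTop A U) (hV : MemOpTop A V) : MemOpTop A (U ∪ V) := by
  rcases hU with hU | rfl
  · rcases hV with hV | rfl
    · exact Or.inl (hU.union hV)
    · simpa using univ
  · simpa using univ

lemma inter (hU : MemOpTop A U) (hV : MemOpTop A V) : MemOpTop A (U ∩ V) := by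
  rcases hU with hU | rfl
  · rcases hV with hV | rfl
    · exact Or.inl (hU.inter hV)
    · rw [inter_univ]; exact Or.inl hU
  · simpa using hV

lemma setOf_const (hA : 0 ∈ A) (p : Prop) : MemOpTop A {_x | p} := by
  by_cases hp : p
  · simpa [hp] using univ
  · simp only [hp, ofPred_false]; exact Or.inl (.empty hA)

end MemOpTop

lemma slice_setOf_single_pos (t : k) :
    slice j t {x | 0 < pairing (single j 1) x} = {_x | 0 < t} := by
  classical
  ext x; simp [slice, pairing_single, update_apply]

lemma slice_setOf_single_neg (t : k) :
    slice j t {x | pairing (single j 1) x < 0} = {_x | t < 0} := by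
  classical
  ext x; simp [slice, pairing_single, update_apply]

lemma slice_setOf_pos_of_apply_eq_zero {a : ι →₀ k} (ha : a j = 0) (t : k) :
    slice j t {x | 0 < pairing a x} = {x | 0 < pairing a x} := by
  ext x; simp [slice, pairing_update_of_apply_eq_zero ha]

lemma slice_setOf_neg_of_apply_eq_zero {a : ι →₀ k} (ha : a j = 0) (t : k) :
    slice j t {x | pairing a x < 0} = {x | pairing a x < 0} := by
  ext x; simp [slice, pairing_update_of_apply_eq_zero ha]

section FreshCoordinate

variable (hAj : ∀ a ∈ A, a j = 0)
include hAj

lemma MemOpTop.slice_eq (hU : MemOpTop A U) (t : k) : slice j t U = U := by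
  rcases hU with hU | rfl
  · induction hU with
    | pos a ha => exact slice_setOf_pos_of_apply_eq_zero (hAj a ha) t
    | neg a ha => exact slice_setOf_neg_of_apply_eq_zero (hAj a ha) t
    | union _ _ ihU ihV => rw [slice_union, ihU, ihV]
    | inter _ _ ihU ihV => rw [slice_inter, ihU, ihV]
  · rfl

lemma MemOpTop.slice_zero_subset (hU : MemOpTop (A ∪ {single j 1}) U) (t : k) :
    slice j 0 U ⊆ slice j t U := by
  rcases hU with hU | rfl
  · induction hU with
    | pos a ha =>
      rcases ha with ha | rfl
      · simp only [slice_setOf_pos_of_apply_eq_zero (hAj a ha), subset_refl]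
      · simp [slice_setOf_single_pos]
    | neg a ha =>
      rcases ha with ha | rfl
      · simp only [slice_setOf_neg_of_apply_eq_zero (hAj a ha), subset_refl]
      · simp [slice_setOf_single_neg]
    | union _ _ ihU ihV => exact union_subset_union ihU ihV
    | inter _ _ ihU ihV => exact inter_subset_inter ihU ihV
  · exact subset_univ _

lemma MemOpTop.slice (hA : 0 ∈ A) (hU : MemOpTop (A ∪ {single j 1}) U) (t : k) :
    MemOpTop A (slice j t U) := by
  rcases hU with hU | rfl
  · induction hU with
    | pos a ha =>
      rcases ha with ha | rfl
      · rw [slice_setOf_pos_of_apply_eq_zero (hAj a ha)]; exact Or.inl (.pos a ha)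
      · rw [slice_setOf_single_pos]; exact setOf_const hA _
    | neg a ha =>
      rcases ha with ha | rfl
      · rw [slice_setOf_neg_of_apply_eq_zero (hAj a ha)]; exact Or.inl (.neg a ha)
      · rw [slice_setOf_single_neg]; exact setOf_const hA _
    | union _ _ ihU ihV => exact ihU.union ihV
    | inter _ _ ihU ihV => exact ihU.inter ihV
  · exact univ

end FreshCoordinate

section SliceExtension

variable {L : Type*} [DistribLattice L] {f : Set (ι →₀ k) → WithTop L}

def sliceExtension (f : Set (ι →₀ k) → WithTop L) (j : ι) (s : k) (c : L) (U : Set (ι →₀ k)) :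
    WithTop L :=
  f (slice j s U) ⊓ c ⊔ f (slice j 0 U)

lemma sliceExtension_setOf_single_pos [OrderBot L] {s : k} (hs : 0 < s) (c : L)
    (hf_univ : f Set.univ = ⊤) (hf_empty : f ∅ = ⊥) :
    sliceExtension f j s c {x | 0 < pairing (single j 1) x} = c := by
  simp [sliceExtension, slice_setOf_single_pos, hs, hf_univ, hf_empty]

variable (hAj : ∀ a ∈ A, a j = 0) (s : k) (c : L)
include hAj

lemma sliceExtension_of_memOpTop (hU : MemOpTop A U) : sliceExtension f j s c U = f U := by
  rw [sliceExtension, hU.slice_eq hAj, hU.slice_eq hAj, sup_eq_right]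
  exact inf_le_left

variable (hA : 0 ∈ A)
include hA

lemma sliceExtension_eq_top_iff
    (hftf : ∀ U, MemOpTop A U → (f U = ⊤ ↔ U = Set.univ)) (hU : MemOpTop (A ∪ {single j 1}) U) :
    sliceExtension f j s c U = ⊤ ↔ U = Set.univ := by
  simp only [sliceExtension, WithTop.sup_eq_top_iff, inf_eq_top_iff, WithTop.coe_ne_top,
    and_false, false_or, hftf _ (hU.slice hAj hA 0)]
  exact ⟨eq_univ_of_slice_zero_subset (hU.slice_zero_subset hAj), by rintro rfl; rfl⟩

variable (hf : ∀ U V, MemOpTop A U → MemOpTop A V → f (U ∪ V) = f U ⊔ f V ∧ f (U ∩ V) = f U ⊓ f V)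
include hf

omit hA hAj in
lemma le_of_subset_of_memOpTop (hU : MemOpTop A U) (hV : MemOpTop A V) (hUV : U ⊆ V) :
    f U ≤ f V := by
  rw [← sup_eq_right, ← (hf U V hU hV).1, union_eq_self_of_subset_left hUV]

lemma sliceExtension_union_inter (hU : MemOpTop (A ∪ {single j 1}) U)
    (hV : MemOpTop (A ∪ {single j 1}) V) :
    sliceExtension f j s c (U ∪ V) = sliceExtension f j s c U ⊔ sliceExtension f j s c V ∧
      sliceExtension f j s c (U ∩ V) = sliceExtension f j s c U ⊓ sliceExtension f j s c V := by
  have hf_s := hf _ _ (hU.slice hAj hA s) (hV.slice hAj hA s)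
  have hf_0 := hf _ _ (hU.slice hAj hA 0) (hV.slice hAj hA 0)
  have hU_le := le_of_subset_of_memOpTop hf (hU.slice hAj hA 0) (hU.slice hAj hA s)
    (hU.slice_zero_subset hAj s)
  have hV_le := le_of_subset_of_memOpTop hf (hV.slice hAj hA 0) (hV.slice hAj hA s)
    (hV.slice_zero_subset hAj s)
  simp only [sliceExtension, slice_union, slice_inter, hf_s.1, hf_s.2, hf_0.1, hf_0.2]
  exact ⟨by rw [inf_sup_right, sup_sup_sup_comm], (inf_sup_inf_sup_of_le _ hU_le hV_le).symm⟩

end SliceExtension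

end OpSlices

theorem stmt16_general (k ι : Type*) [DivisionRing k] [LinearOrder k]
    [CovariantClass k k (· + ·) (· < ·)]
    (I : Set ι) (hIinf : (Set.univ \ I).Infinite)
    (L : Type*) [DistribLattice L] [OrderBot L]
    (D : Set (ι →₀ k)) (hD : D.Finite) (c : L)
    (f : Set (ι →₀ k) → WithTop L)
    (hf : ∀ U V : Set (ι →₀ k), MemOpTop (suppIn I ∪ D) U → MemOpTop (suppIn I ∪ D) V →
      f (U ∪ V) = f U ⊔ f V ∧ f (U ∩ V) = f U ⊓ f V)
    (hf0 : f ∅ = ⊥)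
    (hftf : ∀ U : Set (ι →₀ k), MemOpTop (suppIn I ∪ D) U → (f U = ⊤ ↔ U = Set.univ)) :
    ∃ (e : ι →₀ k) (g : Set (ι →₀ k) → WithTop L),
      (∀ U V : Set (ι →₀ k),
        MemOpTop (suppIn I ∪ D ∪ {e}) U → MemOpTop (suppIn I ∪ D ∪ {e}) V →
        g (U ∪ V) = g U ⊔ g V ∧ g (U ∩ V) = g U ⊓ g V) ∧
      (∀ U : Set (ι →₀ k), MemOpTop (suppIn I ∪ D ∪ {e}) U → (g U = ⊤ ↔ U = Set.univ)) ∧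
      (∀ U : Set (ι →₀ k), MemOpTop (suppIn I ∪ D) U → g U = f U) ∧
      g {x : ι →₀ k | 0 < pairing e x} = (c : WithTop L) := by
  obtain ⟨j, hjI, hjD⟩ := exists_notMem_forall_apply_eq_zero (compl_eq_univ_sdiff I ▸ hIinf) hD
  obtain ⟨s, hs⟩ := exists_pos_of_addLeftStrictMono k
  have hA : (0 : ι →₀ k) ∈ suppIn I ∪ D := Or.inl fun _ _ => rfl
  have hAj : ∀ a ∈ suppIn I ∪ D, a j = 0 := by
    rintro a (ha | ha)
    exacts [ha j hjI, hjD a ha]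
  exact ⟨single j 1, sliceExtension f j s c,
    fun U V => sliceExtension_union_inter hAj s c hA hf,
    fun U => sliceExtension_eq_top_iff hAj s c hA hftf,
    fun U => sliceExtension_of_memOpTop hAj s c,
    sliceExtension_setOf_single_pos hs c ((hftf _ .univ).mpr rfl) hf0⟩

/-- surjectivity step: with `J = ι`, `I ⊊ J` with `J∖I` infinite, a
distributive `0`-lattice `L`, a finite `D ⊆ k^(J)` and `c ∈ L`, for every top-faithful
`0`-lattice homomorphism `f : Op(k^(I) ∪ D, k^(J)) → L ∪ {∞}` there are `e ∈ k^(J)` and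
a top-faithful lattice homomorphism `g : Op(k^(I) ∪ D ∪ {e}, k^(J)) → L ∪ {∞}` extending
`f` with `g ⟦e > 0⟧ = c`. -/
theorem stmt16 (k ι : Type*) [DivisionRing k] [LinearOrder k]
    [CovariantClass k k (· + ·) (· < ·)] [PosMulStrictMono k] [MulPosStrictMono k]
    (I : Set ι) (hIne : I ≠ Set.univ) (hIinf : (Set.univ \ I).Infinite)
    (L : Type*) [DistribLattice L] [OrderBot L]
    (D : Set (ι →₀ k)) (hD : D.Finite) (c : L)
    (f : Set (ι →₀ k) → WithTop L)
    (hf : ∀ U V : Set (ι →₀ k), MemOpTop (suppIn I ∪ D) U → MemOpTop (suppIn I ∪ D) V →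
      f (U ∪ V) = f U ⊔ f V ∧ f (U ∩ V) = f U ⊓ f V)
    (hf0 : f ∅ = ⊥)
    (hftf : ∀ U : Set (ι →₀ k), MemOpTop (suppIn I ∪ D) U → (f U = ⊤ ↔ U = Set.univ)) :
    ∃ (e : ι →₀ k) (g : Set (ι →₀ k) → WithTop L),
      (∀ U V : Set (ι →₀ k),
        MemOpTop (suppIn I ∪ D ∪ {e}) U → MemOpTop (suppIn I ∪ D ∪ {e}) V →
        g (U ∪ V) = g U ⊔ g V ∧ g (U ∩ V) = g U ⊓ g V) ∧
      (∀ U : Set (ι →₀ k), MemOpTop (suppIn I ∪ D ∪ {e}) U → (g U = ⊤ ↔ U = Set.univ)) ∧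
      (∀ U : Set (ι →₀ k), MemOpTop (suppIn I ∪ D) U → g U = f U) ∧
      g {x : ι →₀ k | 0 < pairing e x} = (c : WithTop L) :=
  stmt16_general k ι I hIinf L D hD c f hf hf0 hftf
end

section
/- Let D be a distributive 0-lattice with Boolean envelope BR(D). Then: (1) for all a₁, a₂, b₁, b₂ ∈ D, the inequality a₁ ∧ ¬b₁ ≤ a₂ ∧ ¬b₂ holds in BR(D) if and only if a₁ ≤ a₂ ∨ b₁ and a₁ ∧ b₂ ≤ b₁ hold in D; (2) if D is finite, then for all a, b ∈ D, a ∧ ¬b = ⋁{p ∧ ¬p_* : p ∈ Ji(D), p ≤ a, p ≰ b} in BR(D). -/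
/-!
Part (1) holds in any generalized Boolean algebra: `x \ y ≤ z \ w` says that `x \ y` lies
below `z` and is disjoint from `w`, i.e. `x ≤ z ⊔ y` and `x ⊓ w ≤ y`; an injective lattice
homomorphism reflects these two inequalities back to `D`.

For part (2), each `j p \ j p_*` with `p ≤ a`, `p ≰ b` lies below `j a \ j b` by (1). Conversely,
if `u` bounds all of them, well-founded induction shows `j x ≤ j b ⊔ u` for every `x ≤ a`:
either `x ≤ b`, or `x` is join-irreducible and `j x ≤ j p_* ⊔ (j x \ j p_*)`, or `x` is the join
of two strictly smaller elements.
-/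

theorem sdiff_le_sdiff_iff_le_sup_and_inf_le {β : Type*} [GeneralizedBooleanAlgebra β]
    {x y z w : β} : x \ y ≤ z \ w ↔ x ≤ z ⊔ y ∧ x ⊓ w ≤ y := by
  rw [le_sdiff, sdiff_le_iff', disjoint_iff, sdiff_inf_right_comm, sdiff_eq_bot_iff]

namespace LatticeHom

variable {α β : Type*} [Lattice α] [GeneralizedBooleanAlgebra β]

theorem map_le_map_iff_of_injective (f : LatticeHom α β) (hf : Function.Injective f)
    {x y : α} : f x ≤ f y ↔ x ≤ y := by
  rw [← sup_eq_right, ← map_sup, hf.eq_iff, sup_eq_right]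

theorem map_sdiff_le_map_sdiff (f : LatticeHom α β) {a₁ a₂ b₁ b₂ : α}
    (h₁ : a₁ ≤ a₂ ⊔ b₁) (h₂ : a₁ ⊓ b₂ ≤ b₁) : f a₁ \ f b₁ ≤ f a₂ \ f b₂ := by
  rw [sdiff_le_sdiff_iff_le_sup_and_inf_le, ← map_sup, ← map_inf]
  exact ⟨OrderHomClass.mono f h₁, OrderHomClass.mono f h₂⟩

theorem map_sdiff_le_map_sdiff_iff (f : LatticeHom α β) (hf : Function.Injective f)
    {a₁ a₂ b₁ b₂ : α} : f a₁ \ f b₁ ≤ f a₂ \ f b₂ ↔ a₁ ≤ a₂ ⊔ b₁ ∧ a₁ ⊓ b₂ ≤ b₁ := by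
  rw [sdiff_le_sdiff_iff_le_sup_and_inf_le, ← map_sup, ← map_inf,
    f.map_le_map_iff_of_injective hf, f.map_le_map_iff_of_injective hf]

end LatticeHom

section LowerCover

variable {α β : Type*} [Lattice α] [OrderBot α] [WellFoundedLT α]
  [GeneralizedBooleanAlgebra β] (pstar : α → α)

theorem SupHom.map_le_sup_of_forall_supIrred (hpstar : ∀ p : α, SupIrred p → pstar p < p)
    (f : SupHom α β) {a b : α} {u : β}
    (hu : ∀ p : α, SupIrred p → p ≤ a → ¬ p ≤ b → f p \ f (pstar p) ≤ u) :
    ∀ x ≤ a, f x ≤ f b ⊔ u := by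
  intro x
  induction x using WellFoundedLT.induction with
  | _ x ih =>
    intro hxa
    by_cases hxb : x ≤ b
    · exact le_sup_of_le_left (OrderHomClass.mono f hxb)
    by_cases hx : SupIrred x
    · have hlt : pstar x < x := hpstar x hx
      calc f x = f x ⊓ f (pstar x) ⊔ f x \ f (pstar x) := (sup_inf_sdiff _ _).symm
        _ ≤ (f b ⊔ u) ⊔ u :=
          sup_le_sup (inf_le_right.trans (ih _ hlt (hlt.le.trans hxa))) (hu x hx hxa hxb)
        _ = f b ⊔ u := by rw [sup_assoc, sup_idem]
    obtain hmin | ⟨y, z, rfl, hy, hz⟩ := not_supIrred.mp hx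
    · exact absurd (hmin.eq_bot ▸ bot_le) hxb
    · rw [map_sup]
      exact sup_le (ih y hy (hy.le.trans hxa)) (ih z hz (hz.le.trans hxa))

theorem LatticeHom.isLUB_sdiff_supIrred
    (hpstar : ∀ p : α, SupIrred p → IsGreatest {x : α | x < p} (pstar p))
    (f : LatticeHom α β) (a b : α) :
    IsLUB {c : β | ∃ p : α, SupIrred p ∧ p ≤ a ∧ ¬ p ≤ b ∧ c = f p \ f (pstar p)}
      (f a \ f b) := by
  constructor
  · rintro c ⟨p, hp, hpa, hpb, rfl⟩
    exact f.map_sdiff_le_map_sdiff (le_sup_of_le_left hpa)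
      ((hpstar p hp).2 (inf_lt_left.mpr hpb))
  · intro u hu
    rw [sdiff_le_iff]
    exact SupHom.map_le_sup_of_forall_supIrred pstar (fun p hp => (hpstar p hp).1) f.toSupHom
      (fun p hp hpa hpb => hu ⟨p, hp, hpa, hpb, rfl⟩) a le_rfl

end LowerCover

theorem stmt17_general {D C : Type*} [DistribLattice D] [OrderBot D]
    [GeneralizedBooleanAlgebra C]
    (j : D → C) (hjinj : Function.Injective j)
    (hjhom : ∀ x y : D, j (x ⊔ y) = j x ⊔ j y ∧ j (x ⊓ y) = j x ⊓ j y) :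
    (∀ a₁ a₂ b₁ b₂ : D,
      j a₁ \ j b₁ ≤ j a₂ \ j b₂ ↔ (a₁ ≤ a₂ ⊔ b₁ ∧ a₁ ⊓ b₂ ≤ b₁)) ∧
    (Finite D → ∀ pstar : D → D,
      (∀ p : D, SupIrred p → IsGreatest {x : D | x < p} (pstar p)) →
      ∀ a b : D,
        IsLUB {c : C | ∃ p : D, SupIrred p ∧ p ≤ a ∧ ¬ p ≤ b ∧ c = j p \ j (pstar p)}
          (j a \ j b)) := by
  let f : LatticeHom D C :=
    { toFun := j, map_sup' := fun x y => (hjhom x y).1, map_inf' := fun x y => (hjhom x y).2 }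
  exact ⟨fun _ _ _ _ => f.map_sdiff_le_map_sdiff_iff hjinj,
    fun _ pstar hpstar => LatticeHom.isLUB_sdiff_supIrred pstar hpstar f⟩

/-- basic facts about the Boolean envelope `BR(D)` of a distributive
`0`-lattice `D`.  The envelope is represented by a generalized Boolean algebra `C`
together with a `0`-lattice embedding `j : D → C` whose range generates `C`; the
element `a ∧ ¬b` of `BR(D)` is `j a \ j b`.  In part (2), `pstar p` denotes the unique
lower cover `p_*` of a join-irreducible `p` (the greatest element strictly below `p`),
and the finite join is expressed as a least upper bound. -/
theorem stmt17 {D C : Type*} [DistribLattice D] [OrderBot D]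
    [GeneralizedBooleanAlgebra C]
    (j : D → C) (hjinj : Function.Injective j)
    (hjhom : ∀ x y : D, j (x ⊔ y) = j x ⊔ j y ∧ j (x ⊓ y) = j x ⊓ j y)
    (hjbot : j ⊥ = ⊥)
    (hjgen : ∀ c : C, GBAClosure (Set.range j) c) :
    (∀ a₁ a₂ b₁ b₂ : D,
      j a₁ \ j b₁ ≤ j a₂ \ j b₂ ↔ (a₁ ≤ a₂ ⊔ b₁ ∧ a₁ ⊓ b₂ ≤ b₁)) ∧
    (Finite D → ∀ pstar : D → D,
      (∀ p : D, SupIrred p → IsGreatest {x : D | x < p} (pstar p)) →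
      ∀ a b : D,
        IsLUB {c : C | ∃ p : D, SupIrred p ∧ p ≤ a ∧ ¬ p ≤ b ∧ c = j p \ j (pstar p)}
          (j a \ j b)) :=
  stmt17_general j hjinj hjhom
end
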